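/- arXiv:1409.6694 — 13 statements merged into one kernel-verified Lean document; each statement's English description precedes it below -/
import Mathlib

section
/- The identity e = f + g defines a one-to-one correspondence between vectors e = (a,b) in Z^2 with gcd(a,b) = 1 and ab ≠ 0, and direct acute bases (f,g) of Z^2, i.e. pairs (f,g) of integer vectors with det(f,g) = 1 and ⟨f,g⟩ ≥ 0. -/
/-- Determinant of the 2×2 matrix with columns `f`, `g`. -/
def det2 (f g : ℤ × ℤ) : ℤ := f.1 * g.2 - f.2 * g.1

/-- Euclidean inner product on `ℤ²`. -/
def ip2 (f g : ℤ × ℤ) : ℤ := f.1 * g.1 + f.2 * g.2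

/-- A direct acute basis of `ℤ²`. -/
def IsDAB (f g : ℤ × ℤ) : Prop := det2 f g = 1 ∧ 0 ≤ ip2 f g

/-!
Put `g = e - f` and `s = ⟨f, e⟩`. Then `det(f, g) = det(f, e)`, and the Binet–Cauchy identity
`|e|² ⟨f, g⟩ = s (|e|² - s) - det(f, e)²` shows that `(f, g)` is a direct acute basis exactly
when `det(f, e) = 1` and `0 < s < |e|²`. Solutions of `det(f, e) = 1` exist iff `e` is
primitive and form a coset `f₀ + ℤ e`, along which `s` runs through one residue class modulo
`|e|²`. By Lagrange's identity `s² + 1 = |f|² |e|²` this class is nonzero unless `|e|² = 1`,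
i.e. unless `ab = 0`; so it has exactly one representative in `(0, |e|²)`, and `f` is
determined by `s` and `det(f, e)`.
-/

open Set

section

variable {f f' e : ℤ × ℤ}

theorem ip2_sq_add_det2_sq (f e : ℤ × ℤ) : ip2 f e ^ 2 + det2 f e ^ 2 = ip2 f f * ip2 e e := by
  unfold ip2 det2; ring

theorem ne_zero_of_det2_eq_one (h : det2 f e = 1) : e ≠ 0 := by
  rintro rfl
  simp [det2] at h

theorem ip2_self_pos (he : e ≠ 0) : 0 < ip2 e e := by
  have hcoord : e.1 ≠ 0 ∨ e.2 ≠ 0 := by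
    contrapose! he
    exact Prod.ext he.1 he.2
  unfold ip2
  rcases hcoord with h | h
  · nlinarith [mul_self_pos.2 h, mul_self_nonneg e.2]
  · nlinarith [mul_self_pos.2 h, mul_self_nonneg e.1]

theorem exists_det2_eq_one_iff_isCoprime : (∃ f, det2 f e = 1) ↔ IsCoprime e.1 e.2 := by
  constructor
  · rintro ⟨f, hf⟩
    exact ⟨-f.2, f.1, by unfold det2 at hf; linear_combination hf⟩
  · rintro ⟨u, v, huv⟩
    exact ⟨(v, -u), by unfold det2; linear_combination huv⟩

theorem ip2_self_ne_one_iff_mul_ne_zero (h : IsCoprime e.1 e.2) :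
    ip2 e e ≠ 1 ↔ e.1 * e.2 ≠ 0 := by
  constructor
  · intro hN hmul
    apply hN
    rcases mul_eq_zero.1 hmul with h0 | h0
    · rw [h0, isCoprime_zero_left] at h
      simp [ip2, h0, Int.isUnit_mul_self h]
    · rw [h0, isCoprime_zero_right] at h
      simp [ip2, h0, Int.isUnit_mul_self h]
  · intro hmul hN
    have h1 : 0 < e.1 * e.1 := mul_self_pos.2 (left_ne_zero_of_mul hmul)
    have h2 : 0 < e.2 * e.2 := mul_self_pos.2 (right_ne_zero_of_mul hmul)
    unfold ip2 at hN
    omega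

theorem ip2_self_eq_one_of_dvd (h : det2 f e = 1) (hdvd : ip2 e e ∣ ip2 f e) : ip2 e e = 1 := by
  have hsq := ip2_sq_add_det2_sq f e
  rw [h] at hsq
  refine Int.eq_one_of_dvd_one (ip2_self_pos (ne_zero_of_det2_eq_one h)).le ?_
  have : ip2 e e ∣ ip2 f e ^ 2 + 1 := hsq ▸ dvd_mul_left _ _
  exact (Int.dvd_add_right (hdvd.pow two_ne_zero)).1 this

theorem isDAB_sub_iff : IsDAB f (e - f) ↔ det2 f e = 1 ∧ ip2 f e ∈ Ioo 0 (ip2 e e) := by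
  have hdet : det2 f (e - f) = det2 f e := by
    simp only [det2, Prod.fst_sub, Prod.snd_sub]; ring
  have binet_cauchy :
      ip2 e e * ip2 f (e - f) = ip2 f e * (ip2 e e - ip2 f e) - det2 f e ^ 2 := by
    simp only [ip2, det2, Prod.fst_sub, Prod.snd_sub]; ring
  rw [IsDAB, hdet]
  refine and_congr_right fun h => ?_
  have hN := ip2_self_pos (ne_zero_of_det2_eq_one h)
  rw [h] at binet_cauchy
  constructor
  · intro hip
    have hprod : 0 < ip2 f e * (ip2 e e - ip2 f e) := by nlinarith
    constructor <;> nlinarith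
  · rintro ⟨hs, hs'⟩
    nlinarith

theorem exists_det2_eq_one_ip2_mem_Ioo (h : det2 f e = 1) (hN : ip2 e e ≠ 1) :
    ∃ f', det2 f' e = 1 ∧ ip2 f' e ∈ Ioo 0 (ip2 e e) := by
  have hpos := ip2_self_pos (ne_zero_of_det2_eq_one h)
  -- translating `f` along `e` keeps `det(f, e)` and shifts `⟨f, e⟩` by multiples of `|e|²`
  set f' := f - (ip2 f e / ip2 e e) • e
  have hdet : det2 f' e = 1 := by
    simp only [f', det2, Prod.fst_sub, Prod.snd_sub, Prod.smul_fst, Prod.smul_snd, smul_eq_mul]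
    unfold det2 at h
    linear_combination h
  have hip : ip2 f' e = ip2 f e % ip2 e e := by
    rw [Int.emod_def]
    simp only [f', ip2, Prod.fst_sub, Prod.snd_sub, Prod.smul_fst, Prod.smul_snd, smul_eq_mul]
    ring
  refine ⟨f', hdet, ?_, ?_⟩ <;> rw [hip]
  · refine (Int.emod_nonneg _ hpos.ne').lt_of_ne fun h0 => hN ?_
    exact ip2_self_eq_one_of_dvd h (Int.dvd_of_emod_eq_zero h0.symm)
  · exact Int.emod_lt_of_pos _ hpos

-- `f` is recovered from its coordinates `⟨f, e⟩`, `det(f, e)` in the orthogonal frame `e`, `e⊥`.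
theorem eq_of_ip2_eq_of_det2_eq (he : e ≠ 0) (hip : ip2 f e = ip2 f' e)
    (hdet : det2 f e = det2 f' e) : f = f' := by
  have hN := (ip2_self_pos he).ne'
  unfold ip2 det2 at *
  ext
  · exact mul_left_cancel₀ hN (by linear_combination e.1 * hip + e.2 * hdet)
  · exact mul_left_cancel₀ hN (by linear_combination e.2 * hip - e.1 * hdet)

theorem eq_of_det2_eq_one_of_ip2_mem_Ioo (hf : det2 f e = 1) (hf' : det2 f' e = 1)
    (hs : ip2 f e ∈ Ioo 0 (ip2 e e)) (hs' : ip2 f' e ∈ Ioo 0 (ip2 e e)) : f = f' := by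
  refine eq_of_ip2_eq_of_det2_eq (ne_zero_of_det2_eq_one hf) ?_ (hf.trans hf'.symm)
  have hdvd : ip2 e e ∣ ip2 f e - ip2 f' e := by
    refine ⟨det2 f' f, ?_⟩
    unfold ip2 det2 at *
    linear_combination (f'.1 * e.1 + f'.2 * e.2) * hf - (f.1 * e.1 + f.2 * e.2) * hf'
  have hlt : |ip2 f e - ip2 f' e| < ip2 e e := by
    rw [abs_lt]
    constructor <;> linarith [hs.1, hs.2, hs'.1, hs'.2]
  linarith [Int.eq_zero_of_abs_lt_dvd hdvd hlt]

end

/-- The identity `e = f + g` is a one-to-one correspondence between vectors `e = (a,b)`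
with `gcd(a,b) = 1`, `a*b ≠ 0`, and direct acute bases `(f,g)` of `ℤ²`. -/
theorem stmt0_decomposition_bijection :
    (∀ e : ℤ × ℤ, Int.gcd e.1 e.2 = 1 → e.1 * e.2 ≠ 0 →
      ∃! fg : (ℤ × ℤ) × (ℤ × ℤ), IsDAB fg.1 fg.2 ∧ fg.1 + fg.2 = e) ∧
    (∀ f g : ℤ × ℤ, IsDAB f g →
      Int.gcd (f + g).1 (f + g).2 = 1 ∧ (f + g).1 * (f + g).2 ≠ 0) := by
  refine ⟨fun e hgcd hmul => ?_, fun f g hfg => ?_⟩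
  · have hcop := Int.isCoprime_iff_gcd_eq_one.2 hgcd
    obtain ⟨f₀, hf₀⟩ := exists_det2_eq_one_iff_isCoprime.2 hcop
    obtain ⟨f, hf⟩ := exists_det2_eq_one_ip2_mem_Ioo hf₀
      ((ip2_self_ne_one_iff_mul_ne_zero hcop).2 hmul)
    refine ⟨(f, e - f), ⟨isDAB_sub_iff.2 hf, add_sub_cancel _ _⟩, ?_⟩
    rintro ⟨f', g'⟩ ⟨hdab, hsum⟩
    dsimp only at hdab hsum
    obtain rfl : g' = e - f' := eq_sub_of_add_eq' hsum
    obtain ⟨hdet', hs'⟩ := isDAB_sub_iff.1 hdab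
    rw [eq_of_det2_eq_one_of_ip2_mem_Ioo hdet' hf.1 hs' hf.2]
  · rw [← add_sub_cancel_left f g, isDAB_sub_iff] at hfg
    obtain ⟨hdet, hs₀, hsN⟩ := hfg
    have hcop := exists_det2_eq_one_iff_isCoprime.1 ⟨f, hdet⟩
    refine ⟨Int.isCoprime_iff_gcd_eq_one.1 hcop, (ip2_self_ne_one_iff_mul_ne_zero hcop).1 ?_⟩
    intro hN
    rw [hN] at hsN
    omega
end

section
/- Let e = (a,b) ∈ Z^2 with gcd(a,b) = 1 and ab ≠ 0. Then there exists a unique direct acute basis (f,g) of Z^2 such that e = f + g; moreover both f and g lie in the same closed quadrant of the plane as e. -/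
/-- Membership in the closed quadrant determined by signs `α, β ∈ {-1,1}`. -/
def InQuadrant (α β : ℤ) (v : ℤ × ℤ) : Prop := 0 ≤ α * v.1 ∧ 0 ≤ β * v.2

lemma one_le_sq_sum (u v : ℤ) (h : ¬ (u = 0 ∧ v = 0)) : 1 ≤ u^2 + v^2 := by
  rcases eq_or_ne u 0 with hu | hu
  · rcases eq_or_ne v 0 with hv | hv
    · exact absurd ⟨hu, hv⟩ h
    · nlinarith [Int.one_le_abs hv, sq_abs v, sq_nonneg u, abs_nonneg v]
  · nlinarith [Int.one_le_abs hu, sq_abs u, sq_nonneg v, abs_nonneg u]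

lemma key_uniq (a b x y x' y' : ℤ) (ha : a ≠ 0) (hcop : IsCoprime a b)
    (h1 : x*b - y*a = 1) (h2 : x'*b - y'*a = 1)
    (hip1 : 0 ≤ x*(a-x) + y*(b-y)) (hip2 : 0 ≤ x'*(a-x') + y'*(b-y')) :
    x = x' ∧ y = y' := by
  have hdvd : a ∣ (x - x') * b := ⟨y - y', by linear_combination h1 - h2⟩
  obtain ⟨t, ht⟩ := hcop.dvd_of_dvd_mul_right hdvd
  have heq : a * (t * b) = a * (y - y') := by linear_combination h1 - h2 - b * ht
  have hty : y - y' = t * b := (mul_left_cancel₀ ha heq).symm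
  have hf : 1 ≤ x'^2 + y'^2 := by
    apply one_le_sq_sum
    rintro ⟨rfl, rfl⟩
    simp at h2
  have hg : 1 ≤ (a - x')^2 + (b - y')^2 := by
    apply one_le_sq_sum
    rintro ⟨hu, hv⟩
    have hxa : x' = a := by linarith
    have hyb : y' = b := by linarith
    rw [hxa, hyb] at h2
    nlinarith [h2]
  have hx : x = x' + t * a := by linarith
  have hy : y = y' + t * b := by linarith
  rw [hx, hy] at hip1
  have ht0 : t = 0 := by
    rcases lt_trichotomy t 0 with h | h | h
    · exfalso
      have ht' : t ≤ -1 := by linarith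
      nlinarith [mul_nonneg hip2 (by nlinarith : (0:ℤ) ≤ 2*t^2 - 1),
        mul_nonneg (by nlinarith : (0:ℤ) ≤ t^2 - t - 2) (by linarith : (0:ℤ) ≤ x'^2+y'^2),
        mul_nonneg (by nlinarith : (0:ℤ) ≤ t^2 + t) (by linarith : (0:ℤ) ≤ (a-x')^2+(b-y')^2),
        hf]
    · exact h
    · exfalso
      have ht' : 1 ≤ t := by linarith
      nlinarith [mul_nonneg hip2 (by nlinarith : (0:ℤ) ≤ 2*t^2 - 1),
        mul_nonneg (by nlinarith : (0:ℤ) ≤ t^2 - t) (by linarith : (0:ℤ) ≤ x'^2+y'^2),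
        mul_nonneg (by nlinarith : (0:ℤ) ≤ t^2 + t - 2) (by linarith : (0:ℤ) ≤ (a-x')^2+(b-y')^2),
        hg]
  exact ⟨by rw [hx, ht0]; ring, by rw [hy, ht0]; ring⟩

lemma exist_pos (a b : ℤ) (ha : 1 ≤ a) (hb : 1 ≤ b) (hcop : IsCoprime a b) :
    ∃ p q : ℤ, p * b - q * a = 1 ∧ 0 ≤ p ∧ p ≤ a ∧ 0 ≤ q ∧ q ≤ b := by
  obtain ⟨u, v, huv⟩ := hcop
  set k := (v - 1) / a with hk
  set p := (v - 1) % a + 1 with hp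
  have hane : a ≠ 0 := by linarith
  have hp1 : 1 ≤ p := by
    have := Int.emod_nonneg (v - 1) hane
    omega
  have hpa : p ≤ a := by
    have := Int.emod_lt_of_pos (v - 1) (by linarith : 0 < a)
    omega
  have hpv : p = v - a * k := by
    have h2 := Int.emod_add_mul_ediv (v - 1) a
    rw [← hk] at h2
    omega
  refine ⟨p, -(u + b * k), ?_, by linarith, hpa, ?_, ?_⟩
  · rw [hpv]; linear_combination huv
  · have hdet : p * b - (-(u + b * k)) * a = 1 := by rw [hpv]; linear_combination huv
    nlinarith [hdet, hp1, hb]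
  · have hdet : p * b - (-(u + b * k)) * a = 1 := by rw [hpv]; linear_combination huv
    nlinarith [hdet, hpa, hb, ha, mul_le_mul_of_nonneg_right hpa (by linarith : (0:ℤ) ≤ b)]

lemma exist_gen (a b : ℤ) (ha : a ≠ 0) (hb : b ≠ 0) (hcop : IsCoprime a b) :
    ∃ x y α β : ℤ, (α = 1 ∨ α = -1) ∧ (β = 1 ∨ β = -1) ∧
      x * b - y * a = 1 ∧ 0 ≤ x * (a - x) + y * (b - y) ∧
      0 ≤ α * a ∧ 0 ≤ β * b ∧ 0 ≤ α * x ∧ 0 ≤ β * y ∧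
      0 ≤ α * (a - x) ∧ 0 ≤ β * (b - y) := by
  rcases ha.lt_or_gt with ha' | ha' <;> rcases hb.lt_or_gt with hb' | hb'
  · obtain ⟨p, q, hd, hp0, hpa, hq0, hqb⟩ :=
      exist_pos (-a) (-b) (by linarith) (by linarith) (hcop.neg_left.neg_right)
    exact ⟨-p, -q, -1, -1, Or.inr rfl, Or.inr rfl, by linarith,
      by nlinarith [mul_nonneg hp0 (by linarith : (0:ℤ) ≤ -a - p),
        mul_nonneg hq0 (by linarith : (0:ℤ) ≤ -b - q)],
      by linarith, by linarith, by linarith, by linarith, by linarith, by linarith⟩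
  · obtain ⟨p, q, hd, hp0, hpa, hq0, hqb⟩ :=
      exist_pos (-a) b (by linarith) (by linarith) hcop.neg_left
    exact ⟨a + p, b - q, -1, 1, Or.inr rfl, Or.inl rfl, by linarith,
      by nlinarith [mul_nonneg hp0 (by linarith : (0:ℤ) ≤ -a - p),
        mul_nonneg hq0 (by linarith : (0:ℤ) ≤ b - q)],
      by linarith, by linarith, by linarith, by linarith, by linarith, by linarith⟩
  · obtain ⟨p, q, hd, hp0, hpa, hq0, hqb⟩ :=
      exist_pos a (-b) (by linarith) (by linarith) hcop.neg_right
    exact ⟨a - p, b + q, 1, -1, Or.inl rfl, Or.inr rfl, by linarith,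
      by nlinarith [mul_nonneg hp0 (by linarith : (0:ℤ) ≤ a - p),
        mul_nonneg hq0 (by linarith : (0:ℤ) ≤ -b - q)],
      by linarith, by linarith, by linarith, by linarith, by linarith, by linarith⟩
  · obtain ⟨p, q, hd, hp0, hpa, hq0, hqb⟩ :=
      exist_pos a b (by linarith) (by linarith) hcop
    exact ⟨p, q, 1, 1, Or.inl rfl, Or.inl rfl, by linarith,
      by nlinarith [mul_nonneg hp0 (by linarith : (0:ℤ) ≤ a - p),
        mul_nonneg hq0 (by linarith : (0:ℤ) ≤ b - q)],
      by linarith, by linarith, by linarith, by linarith, by linarith, by linarith⟩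

/-- Let `e = (a,b) ∈ ℤ²` with `gcd(a,b) = 1` and `a*b ≠ 0`.  Then there is a unique
direct acute basis `(f,g)` with `e = f + g`; moreover `f` and `g` lie in the same
closed quadrant as `e`. -/
theorem stmt3_unique_decomposition_quadrant (e : ℤ × ℤ)
    (hgcd : Int.gcd e.1 e.2 = 1) (hne : e.1 * e.2 ≠ 0) :
    (∃! fg : (ℤ × ℤ) × (ℤ × ℤ), IsDAB fg.1 fg.2 ∧ fg.1 + fg.2 = e) ∧
    (∀ f g : ℤ × ℤ, IsDAB f g → f + g = e →
      ∃ α β : ℤ, (α = 1 ∨ α = -1) ∧ (β = 1 ∨ β = -1) ∧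
        InQuadrant α β e ∧ InQuadrant α β f ∧ InQuadrant α β g) := by
  obtain ⟨a, b⟩ := e
  dsimp only at hgcd hne ⊢
  have ha : a ≠ 0 := left_ne_zero_of_mul hne
  have hb : b ≠ 0 := right_ne_zero_of_mul hne
  have hcop : IsCoprime a b := Int.isCoprime_iff_gcd_eq_one.mpr hgcd
  obtain ⟨x, y, α, β, hα, hβ, hdet, hip, q1, q2, q3, q4, q5, q6⟩ := exist_gen a b ha hb hcop
  have key : ∀ f g : ℤ × ℤ, IsDAB f g → f + g = (a, b) → f = (x, y) ∧ g = (a - x, b - y) := by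
    rintro ⟨f1, f2⟩ ⟨g1, g2⟩ ⟨hd, hi⟩ hsum
    rw [Prod.mk_add_mk, Prod.mk.injEq] at hsum
    obtain ⟨e1, e2⟩ := hsum
    simp only [det2] at hd
    simp only [ip2] at hi
    have hd' : f1 * b - f2 * a = 1 := by linear_combination hd - f1 * e2 + f2 * e1
    have hg1 : g1 = a - f1 := by linarith
    have hg2 : g2 = b - f2 := by linarith
    rw [hg1, hg2] at hi
    obtain ⟨hx, hy⟩ := key_uniq a b f1 f2 x y ha hcop hd' hdet hi hip
    subst hx hy hg1 hg2
    exact ⟨rfl, rfl⟩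
  have hIs : IsDAB (x, y) (a - x, b - y) := by
    constructor
    · show x * (b - y) - y * (a - x) = 1
      linear_combination hdet
    · show (0:ℤ) ≤ x * (a - x) + y * (b - y)
      exact hip
  have hSum : ((x, y) : ℤ × ℤ) + (a - x, b - y) = (a, b) := by
    rw [Prod.mk_add_mk]
    congr 1 <;> ring
  constructor
  · refine ⟨((x, y), (a - x, b - y)), ⟨hIs, hSum⟩, ?_⟩
    rintro ⟨f, g⟩ ⟨hD, hS⟩
    obtain ⟨hf, hg⟩ := key f g hD hS
    rw [hf, hg]
  · intro f g hD hS
    obtain ⟨hf, hg⟩ := key f g hD hS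
    subst hf hg
    exact ⟨α, β, hα, hβ, ⟨q1, q2⟩, ⟨q3, q4⟩, ⟨q5, q6⟩⟩
end

section
/- For every symmetric positive definite 2×2 matrix M there exists an M-obtuse superbase of Z^2, and each of its elements e satisfies ‖e‖² ≤ 2 ‖M‖ ‖M⁻¹‖ (Euclidean norm and operator norm). -/
/-- Bilinear form `⟨f, M g⟩` on `ℤ²` (vectors coerced to `ℝ`). -/
def qf (M : Matrix (Fin 2) (Fin 2) ℝ) (f g : ℤ × ℤ) : ℝ :=
  (f.1 : ℝ) * (M 0 0 * g.1 + M 0 1 * g.2) + (f.2 : ℝ) * (M 1 0 * g.1 + M 1 1 * g.2)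

/-- A superbase of `ℤ²`. -/
def IsSuperbase (e₀ e₁ e₂ : ℤ × ℤ) : Prop := e₀ + e₁ + e₂ = 0 ∧ |det2 e₁ e₂| = 1

/-- An `M`-obtuse superbase. -/
def IsObtuse (M : Matrix (Fin 2) (Fin 2) ℝ) (e₀ e₁ e₂ : ℤ × ℤ) : Prop :=
  qf M e₀ e₁ ≤ 0 ∧ qf M e₀ e₂ ≤ 0 ∧ qf M e₁ e₂ ≤ 0

/-- Operator norm of a `2×2` real matrix acting on Euclidean space. -/
noncomputable def opNorm (M : Matrix (Fin 2) (Fin 2) ℝ) : ℝ :=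
  ‖Matrix.toEuclideanCLM (𝕜 := ℝ) M‖

/-!
Minimising the energy `q(e₀) + q(e₁) + q(e₂)`, `q(v) = ⟨v, M v⟩`, over superbases yields an
obtuse one: if `⟨e₁, M e₂⟩ > 0`, then `(-e₁, e₂, e₁ - e₂)` is a superbase of energy lower by
`4 ⟨e₁, M e₂⟩`. Only finitely many superbases have energy below a given bound, since
`det M ‖v‖² ≤ ‖M‖ q(v)`; this follows from the Gram identity
`q(u) q(v) - ⟨u, M v⟩² = det M · det(u, v)²` applied to `v` and its rotation by a right angle.

In an obtuse superbase, `-⟨e₀, M e₁⟩ - ⟨e₀, M e₂⟩ = q(e₀)`, so some `f ∈ {e₁, e₂}` has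
`0 ≤ -⟨e₀, M f⟩ ≤ min (q(e₀) / 2) (q(f))`, and the Gram identity gives `q(e₀) q(f) ≤ 2 det M`.
With `‖f‖ ≥ 1` this yields `det M ‖e₀‖² ≤ 2 ‖M‖²`, and `‖M‖ ≤ det M ‖M⁻¹‖` holds because
`det M • M⁻¹` is the adjugate of `M`, a conjugate of `M` by a rotation.
-/

open Matrix

def normSq (v : ℤ × ℤ) : ℤ := v.1 ^ 2 + v.2 ^ 2

lemma normSq_nonneg (v : ℤ × ℤ) : 0 ≤ normSq v := by
  unfold normSq
  positivity

lemma one_le_normSq {v : ℤ × ℤ} (hv : v ≠ 0) : 1 ≤ normSq v := by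
  by_contra! h
  simp only [normSq] at h
  have h₁ : v.1 ^ 2 = 0 := by nlinarith [sq_nonneg v.1, sq_nonneg v.2]
  have h₂ : v.2 ^ 2 = 0 := by nlinarith [sq_nonneg v.1, sq_nonneg v.2]
  exact hv (Prod.ext (pow_eq_zero_iff two_ne_zero |>.1 h₁) (pow_eq_zero_iff two_ne_zero |>.1 h₂))

lemma finite_setOf_normSq_le (R : ℝ) : {v : ℤ × ℤ | (normSq v : ℝ) ≤ R}.Finite := by
  refine (Set.finite_Icc (-⌊R⌋, -⌊R⌋) (⌊R⌋, ⌊R⌋)).subset fun v hv => ?_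
  have h : normSq v ≤ ⌊R⌋ := Int.le_floor.2 hv
  simp only [normSq] at h
  simp only [Set.mem_Icc, Prod.le_def]
  refine ⟨⟨?_, ?_⟩, ?_, ?_⟩ <;>
    nlinarith [Int.le_self_sq v.1, Int.le_self_sq (-v.1), Int.le_self_sq v.2,
      Int.le_self_sq (-v.2), sq_nonneg v.1, sq_nonneg v.2]

section Form

variable {M : Matrix (Fin 2) (Fin 2) ℝ}

lemma qf_comm (hM : M.IsSymm) (u v : ℤ × ℤ) : qf M u v = qf M v u := by
  simp only [qf, hM.apply 0 1]
  ring

lemma qf_add_right (u v w : ℤ × ℤ) : qf M u (v + w) = qf M u v + qf M u w := by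
  simp only [qf, Prod.fst_add, Prod.snd_add]
  push_cast
  ring

lemma qf_neg_right (u v : ℤ × ℤ) : qf M u (-v) = -qf M u v := by
  simp only [qf, Prod.fst_neg, Prod.snd_neg]
  push_cast
  ring

lemma qf_add_qf_eq_neg {e₀ e₁ e₂ : ℤ × ℤ} (h : e₀ + e₁ + e₂ = 0) :
    qf M e₀ e₁ + qf M e₀ e₂ = -qf M e₀ e₀ := by
  rw [← qf_add_right, show e₁ + e₂ = -e₀ by linear_combination h, qf_neg_right]

lemma qf_mul_qf_sub_sq (hM : M.IsSymm) (u v : ℤ × ℤ) :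
    qf M u u * qf M v v - qf M u v ^ 2 = M.det * det2 u v ^ 2 := by
  simp only [qf, det2, det_fin_two, hM.apply 0 1]
  push_cast
  ring

lemma qf_self_nonneg (hM : M.PosSemidef) (v : ℤ × ℤ) : 0 ≤ qf M v v := by
  have := hM.dotProduct_mulVec_nonneg ![(v.1 : ℝ), v.2]
  simp only [dotProduct, mulVec, Fin.sum_univ_two, Pi.star_apply, star_trivial, cons_val_zero,
    cons_val_one, cons_val_fin_one] at this
  simp only [qf]
  linarith

end Form

section OperatorNorm

open scoped RealInnerProductSpace

lemma opNorm_nonneg (A : Matrix (Fin 2) (Fin 2) ℝ) : 0 ≤ opNorm A := norm_nonneg _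

lemma qf_self_le_opNorm_mul (A : Matrix (Fin 2) (Fin 2) ℝ) (v : ℤ × ℤ) :
    qf A v v ≤ opNorm A * normSq v := by
  set x : EuclideanSpace ℝ (Fin 2) := WithLp.toLp 2 ![(v.1 : ℝ), v.2]
  have hq : qf A v v = ⟪x, toEuclideanCLM (𝕜 := ℝ) A x⟫ := by
    rw [inner_toEuclideanCLM]
    simp [qf, x, dotProduct, mulVec, Fin.sum_univ_two]
  have hx : ‖x‖ ^ 2 = normSq v := by
    simp [EuclideanSpace.real_norm_sq_eq, x, normSq, Fin.sum_univ_two]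
  calc qf A v v ≤ ‖x‖ * ‖toEuclideanCLM (𝕜 := ℝ) A x‖ := hq ▸ real_inner_le_norm _ _
    _ ≤ ‖x‖ * (opNorm A * ‖x‖) := by gcongr; exact ContinuousLinearMap.le_opNorm _ _
    _ = opNorm A * normSq v := by rw [← hx]; ring

lemma opNorm_le_opNorm_adjugate {A : Matrix (Fin 2) (Fin 2) ℝ} (hA : A.IsSymm) :
    opNorm A ≤ opNorm A.adjugate := by
  refine ContinuousLinearMap.opNorm_le_bound _ (opNorm_nonneg _) fun x => ?_
  set y : EuclideanSpace ℝ (Fin 2) := WithLp.toLp 2 ![x 1, -x 0]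
  have hy : ‖y‖ = ‖x‖ := by
    simp [EuclideanSpace.norm_eq, Fin.sum_univ_two, y, add_comm]
  have hAy : ‖toEuclideanCLM (𝕜 := ℝ) A x‖ = ‖toEuclideanCLM (𝕜 := ℝ) A.adjugate y‖ := by
    simp only [EuclideanSpace.norm_eq, ofLp_toEuclideanCLM, mulVec, dotProduct, Fin.sum_univ_two,
      Real.norm_eq_abs, sq_abs, adjugate_fin_two, of_apply, cons_val_zero, cons_val_one,
      cons_val_fin_one, hA.apply 0 1, y]
    congr 1
    ring
  rw [hAy, ← hy]
  exact ContinuousLinearMap.le_opNorm _ _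

lemma opNorm_le_det_mul_opNorm_inv {A : Matrix (Fin 2) (Fin 2) ℝ} (hA : A.IsSymm)
    (hdet : 0 < A.det) : opNorm A ≤ A.det * opNorm A⁻¹ := by
  have hadj : A.det • A⁻¹ = A.adjugate := by
    rw [inv_def, smul_smul, Ring.inverse_eq_inv, mul_inv_cancel₀ hdet.ne', one_smul]
  calc opNorm A ≤ opNorm A.adjugate := opNorm_le_opNorm_adjugate hA
    _ = A.det * opNorm A⁻¹ := by
      rw [← hadj, opNorm, map_smul, norm_smul, Real.norm_of_nonneg hdet.le, opNorm]

end OperatorNorm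

section Bounds

variable {M : Matrix (Fin 2) (Fin 2) ℝ}

lemma det_mul_normSq_le (hM : M.IsSymm) {v : ℤ × ℤ} (hv : 0 ≤ qf M v v) :
    M.det * normSq v ≤ opNorm M * qf M v v := by
  rcases eq_or_ne v 0 with rfl | hv₀
  · simp [normSq, qf]
  set w : ℤ × ℤ := (v.2, -v.1)
  have hgram := qf_mul_qf_sub_sq hM v w
  have hdet : det2 v w = -normSq v := by simp only [det2, normSq, w]; ring
  have hw : qf M w w ≤ opNorm M * normSq v := by
    simpa [normSq, w, add_comm] using qf_self_le_opNorm_mul M w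
  have hn : (0 : ℝ) < normSq v := by exact_mod_cast one_le_normSq hv₀
  rw [hdet] at hgram
  push_cast at hgram
  refine le_of_mul_le_mul_right ?_ hn
  nlinarith [mul_le_mul_of_nonneg_left hw hv, sq_nonneg (qf M v w)]

lemma qf_mul_qf_le_two_det (hM : M.IsSymm) {u v : ℤ × ℤ} (huv : |det2 u v| = 1)
    (h₀ : qf M u v ≤ 0) (hu : -qf M u v ≤ qf M u u / 2) (hv : -qf M u v ≤ qf M v v) :
    qf M u u * qf M v v ≤ 2 * M.det := by
  have hgram := qf_mul_qf_sub_sq hM u v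
  have hdet : (det2 u v : ℝ) ^ 2 = 1 := by rw [← sq_abs, ← Int.cast_abs, huv]; norm_num
  rw [hdet, mul_one] at hgram
  nlinarith [mul_le_mul hu hv (neg_nonneg.2 h₀) (by linarith)]

lemma normSq_le_of_qf_mul_qf_le (hpos : M.PosDef) {e f : ℤ × ℤ} (hf : f ≠ 0)
    (h : qf M e e * qf M f f ≤ 2 * M.det) :
    (normSq e : ℝ) ≤ 2 * opNorm M * opNorm M⁻¹ := by
  have hM : M.IsSymm := isHermitian_iff_isSymm.1 hpos.1
  have hdet := hpos.det_pos
  have he := det_mul_normSq_le hM (qf_self_nonneg hpos.posSemidef e)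
  have hf' := det_mul_normSq_le hM (qf_self_nonneg hpos.posSemidef f)
  have hnf : (1 : ℝ) ≤ normSq f := by exact_mod_cast one_le_normSq hf
  have hnorm := opNorm_le_det_mul_opNorm_inv hM hdet
  have hM₀ := opNorm_nonneg M
  have hne : (0 : ℝ) ≤ normSq e := by exact_mod_cast normSq_nonneg e
  have h₁ : M.det * normSq e ≤ 2 * opNorm M ^ 2 := by
    have hprod := mul_le_mul he hf' (by positivity)
      (mul_nonneg hM₀ (qf_self_nonneg hpos.posSemidef e))
    refine le_of_mul_le_mul_left ?_ hdet
    calc M.det * (M.det * normSq e) ≤ M.det * normSq e * (M.det * normSq f) := by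
          nlinarith [mul_le_mul_of_nonneg_left hnf (mul_nonneg hdet.le hne)]
      _ ≤ opNorm M ^ 2 * (qf M e e * qf M f f) := by linarith
      _ ≤ M.det * (2 * opNorm M ^ 2) := by nlinarith [sq_nonneg (opNorm M)]
  have h₂ : 2 * opNorm M ^ 2 ≤ M.det * (2 * opNorm M * opNorm M⁻¹) := by
    nlinarith
  exact le_of_mul_le_mul_left (h₁.trans h₂) hdet

end Bounds

section Superbase

variable {M : Matrix (Fin 2) (Fin 2) ℝ} {e₀ e₁ e₂ : ℤ × ℤ}

lemma IsSuperbase.rotate (h : IsSuperbase e₀ e₁ e₂) : IsSuperbase e₂ e₀ e₁ := by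
  obtain ⟨hsum, hdet⟩ := h
  obtain rfl : e₀ = -(e₁ + e₂) := by linear_combination hsum
  refine ⟨by abel, ?_⟩
  rw [← hdet]
  congr 1
  simp only [det2, Prod.fst_neg, Prod.snd_neg, Prod.fst_add, Prod.snd_add]
  ring

lemma IsSuperbase.swap (h : IsSuperbase e₀ e₁ e₂) : IsSuperbase e₀ e₂ e₁ := by
  refine ⟨by rw [← h.1]; abel, ?_⟩
  rw [← h.2, ← abs_neg]
  congr 1
  simp only [det2]
  ring

lemma IsSuperbase.flip (h : IsSuperbase e₀ e₁ e₂) : IsSuperbase (-e₁) e₂ (e₁ - e₂) := by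
  refine ⟨by abel, ?_⟩
  rw [← h.2, ← abs_neg]
  congr 1
  simp only [det2, Prod.fst_sub, Prod.snd_sub]
  ring

lemma IsObtuse.rotate (hM : M.IsSymm) (h : IsObtuse M e₀ e₁ e₂) : IsObtuse M e₂ e₀ e₁ :=
  ⟨qf_comm hM e₀ e₂ ▸ h.2.1, qf_comm hM e₁ e₂ ▸ h.2.2, h.1⟩

lemma normSq_le_of_isObtuse (hpos : M.PosDef) (hsb : IsSuperbase e₀ e₁ e₂)
    (hob : IsObtuse M e₀ e₁ e₂) : (normSq e₀ : ℝ) ≤ 2 * opNorm M * opNorm M⁻¹ := by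
  have hM : M.IsSymm := isHermitian_iff_isSymm.1 hpos.1
  obtain ⟨h₀₁, h₀₂, h₁₂⟩ := hob
  have hq₁ := qf_add_qf_eq_neg (M := M) hsb.rotate.rotate.1
  have hq₂ := qf_add_qf_eq_neg (M := M) hsb.rotate.1
  rw [qf_comm hM e₁ e₀] at hq₁
  rw [qf_comm hM e₂ e₀, qf_comm hM e₂ e₁] at hq₂
  have hne {u v : ℤ × ℤ} (huv : |det2 u v| = 1) : v ≠ 0 := by
    rintro rfl
    simp [det2] at huv
  rcases le_total (-qf M e₀ e₁) (qf M e₀ e₀ / 2) with h | h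
  · exact normSq_le_of_qf_mul_qf_le hpos (hne hsb.rotate.2)
      (qf_mul_qf_le_two_det hM hsb.rotate.2 h₀₁ h (by linarith))
  · have hq₀ := qf_add_qf_eq_neg (M := M) hsb.1
    exact normSq_le_of_qf_mul_qf_le hpos (hne hsb.swap.rotate.2)
      (qf_mul_qf_le_two_det hM hsb.swap.rotate.2 h₀₂ (by linarith) (by linarith))

end Superbase

section Energy

variable {M : Matrix (Fin 2) (Fin 2) ℝ} {e₀ e₁ e₂ : ℤ × ℤ}

def energy (M : Matrix (Fin 2) (Fin 2) ℝ) (e₀ e₁ e₂ : ℤ × ℤ) : ℝ :=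
  qf M e₀ e₀ + qf M e₁ e₁ + qf M e₂ e₂

lemma energy_rotate : energy M e₂ e₀ e₁ = energy M e₀ e₁ e₂ := by
  simp only [energy]
  ring

lemma energy_flip (hM : M.IsSymm) (h : e₀ + e₁ + e₂ = 0) :
    energy M (-e₁) e₂ (e₁ - e₂) = energy M e₀ e₁ e₂ - 4 * qf M e₁ e₂ := by
  obtain rfl : e₀ = -(e₁ + e₂) := by linear_combination h
  simp only [energy, qf, hM.apply 0 1, Prod.fst_neg, Prod.snd_neg, Prod.fst_add, Prod.snd_add,
    Prod.fst_sub, Prod.snd_sub]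
  push_cast
  ring

lemma finite_setOf_qf_le (hpos : M.PosDef) (C : ℝ) : {v : ℤ × ℤ | qf M v v ≤ C}.Finite := by
  have hdet := hpos.det_pos
  refine (finite_setOf_normSq_le (opNorm M * C / M.det)).subset fun v (hv : qf M v v ≤ C) => ?_
  have := det_mul_normSq_le (isHermitian_iff_isSymm.1 hpos.1) (qf_self_nonneg hpos.posSemidef v)
  rw [Set.mem_ofPred_eq, le_div_iff₀ hdet]
  nlinarith [mul_le_mul_of_nonneg_left hv (opNorm_nonneg M)]

lemma exists_energy_minimal_superbase (hpos : M.PosDef) :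
    ∃ e₀ e₁ e₂, IsSuperbase e₀ e₁ e₂ ∧
      ∀ f₀ f₁ f₂, IsSuperbase f₀ f₁ f₂ → energy M e₀ e₁ e₂ ≤ energy M f₀ f₁ f₂ := by
  have hstd : IsSuperbase (-1, -1) (1, 0) (0, 1) := ⟨by decide, by decide⟩
  set C := energy M (-1, -1) (1, 0) (0, 1)
  set S := {t : (ℤ × ℤ) × (ℤ × ℤ) × (ℤ × ℤ) |
    IsSuperbase t.1 t.2.1 t.2.2 ∧ energy M t.1 t.2.1 t.2.2 ≤ C}
  have hS : S.Finite := by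
    have hA := finite_setOf_qf_le hpos C
    refine (hA.prod (hA.prod hA)).subset ?_
    rintro ⟨f₀, f₁, f₂⟩ ⟨-, hE⟩
    have h₀ := qf_self_nonneg hpos.posSemidef f₀
    have h₁ := qf_self_nonneg hpos.posSemidef f₁
    have h₂ := qf_self_nonneg hpos.posSemidef f₂
    simp only [energy] at hE
    exact ⟨show qf M f₀ f₀ ≤ C by linarith, show qf M f₁ f₁ ≤ C by linarith,
      show qf M f₂ f₂ ≤ C by linarith⟩
  obtain ⟨⟨e₀, e₁, e₂⟩, ⟨hsb, hE⟩, hmin⟩ :=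
    S.exists_min_image (fun t => energy M t.1 t.2.1 t.2.2) hS
      ⟨((-1, -1), (1, 0), (0, 1)), hstd, le_rfl⟩
  refine ⟨e₀, e₁, e₂, hsb, fun f₀ f₁ f₂ hf => ?_⟩
  by_cases hfC : energy M f₀ f₁ f₂ ≤ C
  · exact hmin (f₀, f₁, f₂) ⟨hf, hfC⟩
  · linarith

lemma qf_nonpos_of_energy_minimal (hM : M.IsSymm) (hsb : IsSuperbase e₀ e₁ e₂)
    (hmin : ∀ f₀ f₁ f₂, IsSuperbase f₀ f₁ f₂ → energy M e₀ e₁ e₂ ≤ energy M f₀ f₁ f₂) :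
    qf M e₁ e₂ ≤ 0 := by
  have := hmin _ _ _ hsb.flip
  rw [energy_flip hM hsb.1] at this
  linarith

lemma isObtuse_of_energy_minimal (hM : M.IsSymm) (hsb : IsSuperbase e₀ e₁ e₂)
    (hmin : ∀ f₀ f₁ f₂, IsSuperbase f₀ f₁ f₂ → energy M e₀ e₁ e₂ ≤ energy M f₀ f₁ f₂) :
    IsObtuse M e₀ e₁ e₂ := by
  have hmin₁ : ∀ f₀ f₁ f₂, IsSuperbase f₀ f₁ f₂ → energy M e₂ e₀ e₁ ≤ energy M f₀ f₁ f₂ :=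
    fun f₀ f₁ f₂ hf => energy_rotate.trans_le (hmin f₀ f₁ f₂ hf)
  have hmin₂ : ∀ f₀ f₁ f₂, IsSuperbase f₀ f₁ f₂ → energy M e₁ e₂ e₀ ≤ energy M f₀ f₁ f₂ :=
    fun f₀ f₁ f₂ hf => energy_rotate.trans_le (hmin₁ f₀ f₁ f₂ hf)
  exact ⟨qf_nonpos_of_energy_minimal hM hsb.rotate hmin₁,
    qf_comm hM e₀ e₂ ▸ qf_nonpos_of_energy_minimal hM hsb.rotate.rotate hmin₂,
    qf_nonpos_of_energy_minimal hM hsb hmin⟩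

end Energy

theorem stmt4_obtuse_superbase_exists_general (M : Matrix (Fin 2) (Fin 2) ℝ)
    (hpos : M.PosDef) :
    ∃ e₀ e₁ e₂ : ℤ × ℤ, IsSuperbase e₀ e₁ e₂ ∧ IsObtuse M e₀ e₁ e₂ ∧
      ∀ e ∈ ({e₀, e₁, e₂} : Set (ℤ × ℤ)),
        ((e.1 ^ 2 + e.2 ^ 2 : ℤ) : ℝ) ≤ 2 * opNorm M * opNorm M⁻¹ := by
  have hM : M.IsSymm := isHermitian_iff_isSymm.1 hpos.1
  obtain ⟨e₀, e₁, e₂, hsb, hmin⟩ := exists_energy_minimal_superbase hpos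
  have hob := isObtuse_of_energy_minimal hM hsb hmin
  refine ⟨e₀, e₁, e₂, hsb, hob, ?_⟩
  rintro e (rfl | rfl | rfl)
  · exact normSq_le_of_isObtuse hpos hsb hob
  · exact normSq_le_of_isObtuse hpos hsb.rotate.rotate ((hob.rotate hM).rotate hM)
  · exact normSq_le_of_isObtuse hpos hsb.rotate (hob.rotate hM)

/-- For every symmetric positive definite `M` there is an `M`-obtuse superbase of `ℤ²`,
each of whose elements `e` satisfies `‖e‖² ≤ 2 ‖M‖ ‖M⁻¹‖`. -/
theorem stmt4_obtuse_superbase_exists (M : Matrix (Fin 2) (Fin 2) ℝ)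
    (hsym : M.IsSymm) (hpos : M.PosDef) :
    ∃ e₀ e₁ e₂ : ℤ × ℤ, IsSuperbase e₀ e₁ e₂ ∧ IsObtuse M e₀ e₁ e₂ ∧
      ∀ e ∈ ({e₀, e₁, e₂} : Set (ℤ × ℤ)),
        ((e.1 ^ 2 + e.2 ^ 2 : ℤ) : ℝ) ≤ 2 * opNorm M * opNorm M⁻¹ :=
  stmt4_obtuse_superbase_exists_general M hpos
end

section
/- Selling's energy identity: for a superbase (e₀,e₁,e₂) of Z^2 and M symmetric positive definite, if 0 ≤ i < j ≤ 2 and {i,j,k} = {0,1,2}, the superbase obtained by replacing (e_i, e_j, e_k) with (e_i − e_j, e_j, −e_i) is again a superbase, and its energy E' satisfies E' = E − 4⟨e_i, M e_j⟩, where E := ‖e₀‖²_M + ‖e₁‖²_M + ‖e₂‖²_M with ‖e‖²_M := ⟨e, M e⟩. -/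
/-- A superbase of `ℤ²`, as a triple indexed by `Fin 3`. -/
def IsSuperbase3 (e : Fin 3 → ℤ × ℤ) : Prop :=
  e 0 + e 1 + e 2 = 0 ∧ |det2 (e 1) (e 2)| = 1

lemma selling_aux (M : Matrix (Fin 2) (Fin 2) ℝ) (hM : M 1 0 = M 0 1)
    (u v t : ℤ × ℤ) (h : u + v + t = 0) (hd : |det2 v t| = 1) :
    IsSuperbase3 ![u - v, v, -u] ∧
      qf M (u - v) (u - v) + qf M v v + qf M (-u) (-u)
        = (qf M u u + qf M v v + qf M t t) - 4 * qf M u v := by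
  have h1 : u.1 + v.1 + t.1 = 0 := by
    have := congrArg Prod.fst h; simpa using this
  have h2 : u.2 + v.2 + t.2 = 0 := by
    have := congrArg Prod.snd h; simpa using this
  refine ⟨⟨?_, ?_⟩, ?_⟩
  · show (u - v) + v + -u = 0
    ring
  · show |det2 v (-u)| = 1
    rw [show det2 v (-u) = det2 v t by
      simp only [det2, Prod.fst_neg, Prod.snd_neg]
      linear_combination v.2 * h1 - v.1 * h2]
    exact hd
  · have ht1 : ((t.1 : ℤ) : ℝ) = -((u.1 : ℤ) : ℝ) - ((v.1 : ℤ) : ℝ) := by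
      exact_mod_cast show (t.1 : ℤ) = -u.1 - v.1 by omega
    have ht2 : ((t.2 : ℤ) : ℝ) = -((u.2 : ℤ) : ℝ) - ((v.2 : ℤ) : ℝ) := by
      exact_mod_cast show (t.2 : ℤ) = -u.2 - v.2 by omega
    simp only [qf, Prod.fst_sub, Prod.snd_sub, Prod.fst_neg, Prod.snd_neg,
      Int.cast_sub, Int.cast_neg]
    rw [ht1, ht2, hM]
    ring

/-- Selling's energy identity: replacing `(eᵢ, eⱼ, eₖ)` by `(eᵢ − eⱼ, eⱼ, −eᵢ)` yields
again a superbase, whose energy is `E − 4⟨eᵢ, M eⱼ⟩`. -/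
theorem stmt5_selling_energy (M : Matrix (Fin 2) (Fin 2) ℝ)
    (hsym : M.IsSymm) (hpos : M.PosDef)
    (e : Fin 3 → ℤ × ℤ) (hsb : IsSuperbase3 e)
    (i j k : Fin 3) (hij : i < j) (hperm : ({i, j, k} : Finset (Fin 3)) = Finset.univ) :
    IsSuperbase3 ![e i - e j, e j, -(e i)] ∧
      (qf M (e i - e j) (e i - e j) + qf M (e j) (e j) + qf M (-(e i)) (-(e i))
        = (qf M (e 0) (e 0) + qf M (e 1) (e 1) + qf M (e 2) (e 2))
          - 4 * qf M (e i) (e j)) := by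
  obtain ⟨hs, hd⟩ := hsb
  have hM : M 1 0 = M 0 1 := hsym.apply 0 1
  have h1 : (e 0).1 + (e 1).1 + (e 2).1 = 0 := by
    have := congrArg Prod.fst hs; simpa using this
  have h2 : (e 0).2 + (e 1).2 + (e 2).2 = 0 := by
    have := congrArg Prod.snd hs; simpa using this
  have hcase : (i = 0 ∧ j = 1) ∨ (i = 0 ∧ j = 2) ∨ (i = 1 ∧ j = 2) := by
    have h3i := i.isLt
    have h3j := j.isLt
    rw [Fin.lt_def] at hij
    simp only [Fin.ext_iff, Fin.val_zero, Fin.val_one, Fin.val_two]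
    omega
  rcases hcase with ⟨hi, hj⟩ | ⟨hi, hj⟩ | ⟨hi, hj⟩ <;> subst hi <;> subst hj
  · -- (i,j) = (0,1), t = e 2
    have := selling_aux M hM (e 0) (e 1) (e 2) hs hd
    exact ⟨this.1, by rw [this.2]⟩
  · -- (i,j) = (0,2), t = e 1
    have hs' : e 0 + e 2 + e 1 = 0 := by rw [← hs]; ring
    have hd' : |det2 (e 2) (e 1)| = 1 := by
      rw [show det2 (e 2) (e 1) = -det2 (e 1) (e 2) by simp [det2]; ring, abs_neg]
      exact hd
    have := selling_aux M hM (e 0) (e 2) (e 1) hs' hd'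
    exact ⟨this.1, by rw [this.2]; ring⟩
  · -- (i,j) = (1,2), t = e 0
    have hs' : e 1 + e 2 + e 0 = 0 := by rw [← hs]; ring
    have hd' : |det2 (e 2) (e 0)| = 1 := by
      rw [show det2 (e 2) (e 0) = det2 (e 1) (e 2) by
        simp only [det2]
        linear_combination -(e 2).2 * h1 + (e 2).1 * h2]
      exact hd
    have := selling_aux M hM (e 1) (e 2) (e 0) hs' hd'
    exact ⟨this.1, by rw [this.2]; ring⟩
end

section
/- For a superbase (e₀,e₁,e₂) of Z^2, a symmetric positive definite matrix M, and δᵢ := ⟨eᵢ, M eᵢ⟩, the triple (δ₀,δ₁,δ₂) satisfies the triangle inequalities δᵢ ≤ δⱼ + δₖ (for every permutation {i,j,k} of {0,1,2}) if and only if the superbase is M-obtuse; more precisely δᵢ − δⱼ − δₖ = 2⟨eⱼ, M eₖ⟩. -/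
/-- With `δᵢ := ⟨eᵢ, M eᵢ⟩`, one has `δᵢ − δⱼ − δₖ = 2⟨eⱼ, M eₖ⟩`, and the triangle
inequalities `δᵢ ≤ δⱼ + δₖ` hold for all permutations iff the superbase is `M`-obtuse. -/
theorem stmt8_triangle_iff_obtuse (M : Matrix (Fin 2) (Fin 2) ℝ)
    (hsym : M.IsSymm) (hpos : M.PosDef)
    (e₀ e₁ e₂ : ℤ × ℤ) (hsb : IsSuperbase e₀ e₁ e₂) :
    (qf M e₀ e₀ - qf M e₁ e₁ - qf M e₂ e₂ = 2 * qf M e₁ e₂) ∧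
    (qf M e₁ e₁ - qf M e₀ e₀ - qf M e₂ e₂ = 2 * qf M e₀ e₂) ∧
    (qf M e₂ e₂ - qf M e₀ e₀ - qf M e₁ e₁ = 2 * qf M e₀ e₁) ∧
    ((qf M e₀ e₀ ≤ qf M e₁ e₁ + qf M e₂ e₂ ∧
      qf M e₁ e₁ ≤ qf M e₀ e₀ + qf M e₂ e₂ ∧
      qf M e₂ e₂ ≤ qf M e₀ e₀ + qf M e₁ e₁) ↔ IsObtuse M e₀ e₁ e₂) := by

  have hs : M 1 0 = M 0 1 := by
    have := congrFun (congrFun hsym 0) 1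
    simpa [Matrix.IsSymm, Matrix.transpose_apply] using this
  obtain ⟨hsum, _⟩ := hsb
  have h1 : (e₀.1 : ℝ) = -(e₁.1 : ℝ) - (e₂.1 : ℝ) := by
    have : e₀.1 + e₁.1 + e₂.1 = 0 := by
      have := congrArg Prod.fst hsum; simpa using this
    push_cast [show e₀.1 = -e₁.1 - e₂.1 by omega]; ring
  have h2 : (e₀.2 : ℝ) = -(e₁.2 : ℝ) - (e₂.2 : ℝ) := by
    have : e₀.2 + e₁.2 + e₂.2 = 0 := by
      have := congrArg Prod.snd hsum; simpa using this
    push_cast [show e₀.2 = -e₁.2 - e₂.2 by omega]; ring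
  have hA : qf M e₀ e₀ - qf M e₁ e₁ - qf M e₂ e₂ = 2 * qf M e₁ e₂ := by
    simp only [qf, h1, h2, hs]; ring
  have hB : qf M e₁ e₁ - qf M e₀ e₀ - qf M e₂ e₂ = 2 * qf M e₀ e₂ := by
    simp only [qf, h1, h2, hs]; ring
  have hC : qf M e₂ e₂ - qf M e₀ e₀ - qf M e₁ e₁ = 2 * qf M e₀ e₁ := by
    simp only [qf, h1, h2, hs]; ring
  refine ⟨hA, hB, hC, ?_⟩
  constructor
  · rintro ⟨t0, t1, t2⟩
    exact ⟨by linarith, by linarith, by linarith⟩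
  · rintro ⟨o1, o2, o3⟩
    exact ⟨by linarith, by linarith, by linarith⟩
end

section
/- For the superbase e₀ = (−1,−1), e₁ = (1,0), e₂ = (0,1) and any symmetric 2×2 matrix M, with μᵢ := ⟨eᵢ, M eᵢ⟩, one has (μ₀μ₁+μ₁μ₂+μ₂μ₀)/2 − (μ₀²+μ₁²+μ₂²)/4 = det(M). More generally this identity holds for any superbase of Z^2. -/
noncomputable def h1Fun (a b c : ℝ) : ℝ :=
  (a * b + b * c + c * a) / 2 - (a ^ 2 + b ^ 2 + c ^ 2) / 4

/-- For the special superbase `(−1,−1), (1,0), (0,1)` and, more generally, for any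
superbase of `ℤ²`, and any symmetric `M`, one has `h₁(μ₀,μ₁,μ₂) = det M`,
where `μᵢ := ⟨eᵢ, M eᵢ⟩`. -/
theorem stmt9_h1_det (M : Matrix (Fin 2) (Fin 2) ℝ) (hsym : M.IsSymm) :
    (h1Fun (qf M (-1, -1) (-1, -1)) (qf M (1, 0) (1, 0)) (qf M (0, 1) (0, 1)) = M.det) ∧
    (∀ e₀ e₁ e₂ : ℤ × ℤ, IsSuperbase e₀ e₁ e₂ →
      h1Fun (qf M e₀ e₀) (qf M e₁ e₁) (qf M e₂ e₂) = M.det) := by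
  have hs : M 1 0 = M 0 1 := hsym.apply 0 1
  constructor
  · simp only [qf, h1Fun, Matrix.det_fin_two]
    push_cast
    rw [hs]; ring
  · rintro ⟨x, y⟩ ⟨a, b⟩ ⟨c, d⟩ ⟨hsum, hdet⟩
    have h1 : x = -(a + c) := by
      have := congrArg Prod.fst hsum; simp at this; linarith
    have h2 : y = -(b + d) := by
      have := congrArg Prod.snd hsum; simp at this; linarith
    have hd : ((a : ℝ) * d - b * c) ^ 2 = 1 := by
      have : (det2 (a, b) (c, d)) ^ 2 = 1 := by
        rw [← sq_abs, hdet]; norm_num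
      have := congrArg (fun z : ℤ => (z : ℝ)) this
      push_cast at this
      simpa [det2] using this
    subst h1 h2
    simp only [qf, h1Fun, Matrix.det_fin_two]
    push_cast
    rw [hs]
    linear_combination (M 0 0 * M 1 1 - M 0 1 ^ 2) * hd
end

section
/- Let f, g ∈ Z^2 and let T be the triangle with vertices 0, f, g. If |det(f,g)| > 1 then T contains a point e ∈ Z^2, distinct from its vertices, with coprime coordinates. -/
/-- Coercion of an integer vector to `ℝ²`. -/
def toR2 (v : ℤ × ℤ) : ℝ × ℝ := ((v.1 : ℝ), (v.2 : ℝ))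

section ConvexHull

variable {𝕜 E : Type*} [Field 𝕜] [LinearOrder 𝕜] [IsStrictOrderedRing 𝕜] [AddCommGroup E]
  [Module 𝕜 E]

theorem smul_add_smul_mem_convexHull_zero_pair {x y : E} {α β : 𝕜} (hα : 0 ≤ α) (hβ : 0 ≤ β)
    (hαβ : α + β ≤ 1) : α • x + β • y ∈ convexHull 𝕜 {0, x, y} := by
  have h := (convex_convexHull 𝕜 ({0, x, y} : Set E)).sum_mem (t := Finset.univ)
    (w := ![1 - α - β, α, β]) (z := ![0, x, y])
  simp only [Fin.sum_univ_three, Finset.mem_univ, forall_const] at h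
  simpa using h (by simp [Fin.forall_fin_succ, hα, hβ]; linarith) (by simp; ring)
    (by intro i; fin_cases i <;> exact subset_convexHull 𝕜 _ (by simp))

end ConvexHull

section Det2

variable (f g p q : ℤ × ℤ) (c : ℤ)

@[simp] theorem det2_self : det2 f f = 0 := by simp only [det2]; ring

@[simp] theorem det2_zero_left : det2 0 g = 0 := by simp [det2]

@[simp] theorem det2_zero_right : det2 f 0 = 0 := by simp [det2]

theorem det2_comm : det2 g f = -det2 f g := by simp only [det2]; ring

@[simp] theorem det2_add_left : det2 (p + q) g = det2 p g + det2 q g := by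
  simp only [det2, Prod.fst_add, Prod.snd_add]; ring

@[simp] theorem det2_add_right : det2 f (p + q) = det2 f p + det2 f q := by
  simp only [det2, Prod.fst_add, Prod.snd_add]; ring

@[simp] theorem det2_sub_left : det2 (p - q) g = det2 p g - det2 q g := by
  simp only [det2, Prod.fst_sub, Prod.snd_sub]; ring

@[simp] theorem det2_sub_right : det2 f (p - q) = det2 f p - det2 f q := by
  simp only [det2, Prod.fst_sub, Prod.snd_sub]; ring

@[simp] theorem det2_smul_left : det2 (c • p) g = c * det2 p g := by
  simp only [det2, Prod.smul_fst, Prod.smul_snd, smul_eq_mul]; ring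

@[simp] theorem det2_smul_right : det2 f (c • p) = c * det2 f p := by
  simp only [det2, Prod.smul_fst, Prod.smul_snd, smul_eq_mul]; ring

end Det2

/-- `p` is a lattice point of the triangle `0 f g` other than its vertices, read off the Cramer
numerators `det2 p g` and `det2 f p` of `p` in the basis `f, g`. -/
structure IsNonvertexPoint (f g p : ℤ × ℤ) : Prop where
  left_nonneg : 0 ≤ det2 p g
  right_nonneg : 0 ≤ det2 f p
  sum_pos : 0 < det2 p g + det2 f p
  sum_le : det2 p g + det2 f p ≤ det2 f g
  left_lt : det2 p g < det2 f g
  right_lt : det2 f p < det2 f g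

namespace IsNonvertexPoint

variable {f g p : ℤ × ℤ}

theorem ne_zero (hp : IsNonvertexPoint f g p) : p ≠ 0 := by
  rintro rfl
  simpa using hp.sum_pos

theorem ne_left (hp : IsNonvertexPoint f g p) : p ≠ f := by
  rintro rfl
  simpa using hp.left_lt

theorem ne_right (hp : IsNonvertexPoint f g p) : p ≠ g := by
  rintro rfl
  simpa using hp.right_lt

theorem toR2_mem_convexHull (hp : IsNonvertexPoint f g p) :
    toR2 p ∈ convexHull ℝ ({(0, 0), toR2 f, toR2 g} : Set (ℝ × ℝ)) := by
  have hD : (0 : ℝ) < det2 f g := by exact_mod_cast hp.sum_pos.trans_le hp.sum_le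
  have cramer : toR2 p = ((det2 p g : ℝ) / det2 f g) • toR2 f
      + ((det2 f p : ℝ) / det2 f g) • toR2 g := by
    ext <;> simp only [toR2, Prod.smul_fst, Prod.smul_snd, Prod.fst_add, Prod.snd_add,
      smul_eq_mul] <;> field_simp <;> simp only [det2, Int.cast_sub, Int.cast_mul] <;> ring
  rw [cramer, Prod.mk_zero_zero]
  refine smul_add_smul_mem_convexHull_zero_pair (div_nonneg ?_ hD.le) (div_nonneg ?_ hD.le) ?_
  · exact_mod_cast hp.left_nonneg
  · exact_mod_cast hp.right_nonneg
  · rw [← add_div, div_le_one hD]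
    exact_mod_cast hp.sum_le

theorem of_smul {d : ℤ} (hd : 0 < d) (hp : IsNonvertexPoint f g (d • p)) :
    IsNonvertexPoint f g p := by
  obtain ⟨h₁, h₂, h₃, h₄, h₅, h₆⟩ := hp
  simp only [det2_smul_left, det2_smul_right] at h₁ h₂ h₃ h₄ h₅ h₆
  have ha := nonneg_of_mul_nonneg_right h₁ hd
  have hb := nonneg_of_mul_nonneg_right h₂ hd
  exact ⟨ha, hb, by nlinarith, by nlinarith, by nlinarith, by nlinarith⟩

theorem exists_primitive (hp : IsNonvertexPoint f g p) :
    ∃ e, IsNonvertexPoint f g e ∧ Int.gcd e.1 e.2 = 1 := by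
  have hgcd : 0 < Int.gcd p.1 p.2 := by
    refine Nat.pos_of_ne_zero fun h ↦ hp.ne_zero ?_
    obtain ⟨h₁, h₂⟩ := Int.gcd_eq_zero_iff.mp h
    exact Prod.ext h₁ h₂
  obtain ⟨d, e₁, e₂, hd, he, h₁, h₂⟩ := Int.exists_gcd_one' hgcd
  have hpe : p = (d : ℤ) • (e₁, e₂) := Prod.ext (by simp [h₁, mul_comm]) (by simp [h₂, mul_comm])
  exact ⟨(e₁, e₂), of_smul (by exact_mod_cast hd) (hpe ▸ hp), he⟩

end IsNonvertexPoint

theorem exists_det2_not_dvd {f g : ℤ × ℤ} (hD : 2 ≤ det2 f g) :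
    ∃ v, ¬(det2 f g ∣ det2 v g ∧ det2 f g ∣ det2 f v) := by
  set D := det2 f g
  by_contra! h
  obtain ⟨hg₂, hf₂⟩ := h (1, 0)
  obtain ⟨hg₁, hf₁⟩ := h (0, 1)
  simp only [det2, one_mul, zero_mul, sub_zero, zero_sub, mul_one, mul_zero, dvd_neg]
    at hg₂ hf₂ hg₁ hf₁
  have hsq : D * D ∣ D := dvd_sub (mul_dvd_mul hf₁ hg₂) (mul_dvd_mul hf₂ hg₁)
  have := Int.le_of_dvd (by omega) hsq
  nlinarith

theorem exists_isNonvertexPoint {f g : ℤ × ℤ} (hD : 2 ≤ det2 f g) :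
    ∃ p, IsNonvertexPoint f g p := by
  obtain ⟨v, hv⟩ := exists_det2_not_dvd hD
  set D := det2 f g
  set p := v - (det2 v g / D) • f - (det2 f v / D) • g
  have ha : det2 p g = det2 v g % D := by
    simp only [p, det2_sub_left, det2_smul_left, det2_self, Int.emod_def]; ring
  have hb : det2 f p = det2 f v % D := by
    simp only [p, det2_sub_right, det2_smul_right, det2_self, Int.emod_def]; ring
  have hab : det2 p g ≠ 0 ∨ det2 f p ≠ 0 := by
    by_contra! h
    rw [ha, hb] at h
    exact hv ⟨Int.dvd_of_emod_eq_zero h.1, Int.dvd_of_emod_eq_zero h.2⟩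
  have := Int.emod_nonneg (det2 v g) (by omega : D ≠ 0)
  have := Int.emod_nonneg (det2 f v) (by omega : D ≠ 0)
  have := Int.emod_lt_of_pos (det2 v g) (by omega : 0 < D)
  have := Int.emod_lt_of_pos (det2 f v) (by omega : 0 < D)
  rcases le_or_gt (det2 p g + det2 f p) D with hle | hgt
  · exact ⟨p, by constructor <;> omega⟩
  · refine ⟨f + g - p, ?_⟩
    constructor <;>
      simp only [det2_sub_left, det2_sub_right, det2_add_left, det2_add_right, det2_self] <;>
      omega

theorem exists_primitive_nonvertex_mem_convexHull {f g : ℤ × ℤ} (hD : 2 ≤ det2 f g) :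
    ∃ e : ℤ × ℤ, toR2 e ∈ convexHull ℝ ({(0, 0), toR2 f, toR2 g} : Set (ℝ × ℝ)) ∧
      e ≠ (0, 0) ∧ e ≠ f ∧ e ≠ g ∧ Int.gcd e.1 e.2 = 1 := by
  obtain ⟨p, hp⟩ := exists_isNonvertexPoint hD
  obtain ⟨e, he, he_gcd⟩ := hp.exists_primitive
  exact ⟨e, he.toR2_mem_convexHull, he.ne_zero, he.ne_left, he.ne_right, he_gcd⟩

/-- If `|det(f,g)| > 1` then the triangle `[0, f, g]` contains a lattice point,
distinct from its vertices, with coprime coordinates. -/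
theorem stmt11_triangle_lattice_point (f g : ℤ × ℤ) (hdet : 1 < |det2 f g|) :
    ∃ e : ℤ × ℤ, toR2 e ∈ convexHull ℝ ({(0, 0), toR2 f, toR2 g} : Set (ℝ × ℝ)) ∧
      e ≠ (0, 0) ∧ e ≠ f ∧ e ≠ g ∧ Int.gcd e.1 e.2 = 1 := by
  rcases lt_abs.mp hdet with h | h
  · exact exists_primitive_nonvertex_mem_convexHull (by omega)
  · obtain ⟨e, he, h₀, hg, hf, he_gcd⟩ :=
      exists_primitive_nonvertex_mem_convexHull (f := g) (g := f) (by rw [det2_comm]; omega)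
    exact ⟨e, by rwa [Set.pair_comm], h₀, hf, hg, he_gcd⟩
end

section
/- Let e = f ⊕ g (i.e. e = f + g where (f,g) is a direct acute basis of Z^2). If ‖f‖ > ‖g‖ then f = (f−g) ⊕ g; if ‖g‖ > ‖f‖ then g = f ⊕ (g−f); and if ‖f‖ = ‖g‖ then ‖e‖² = 2. -/
/-- `e = f ⊕ g`: the decomposition `e = f + g` with `(f,g)` a direct acute basis. -/
def IsDecomp (e f g : ℤ × ℤ) : Prop := IsDAB f g ∧ e = f + g

lemma norm_pos_of_det (f g : ℤ × ℤ) (hdet : f.1 * g.2 - f.2 * g.1 ≠ 0) :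
    1 ≤ g.1 ^ 2 + g.2 ^ 2 := by
  by_contra hc
  push_neg at hc
  have h1 : g.1 ^ 2 = 0 := le_antisymm (by nlinarith [sq_nonneg g.2]) (sq_nonneg g.1)
  have h2 : g.2 ^ 2 = 0 := le_antisymm (by nlinarith [sq_nonneg g.1]) (sq_nonneg g.2)
  have h1' : g.1 = 0 := by exact pow_eq_zero_iff two_ne_zero |>.mp h1
  have h2' : g.2 = 0 := by exact pow_eq_zero_iff two_ne_zero |>.mp h2
  rw [h1', h2'] at hdet
  simp at hdet

/-- If `e = f ⊕ g` then: `‖f‖ > ‖g‖` implies `f = (f−g) ⊕ g`; `‖g‖ > ‖f‖` implies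
`g = f ⊕ (g−f)`; and `‖f‖ = ‖g‖` implies `‖e‖² = 2`. -/
theorem stmt13_subSum (e f g : ℤ × ℤ) (h : IsDecomp e f g) :
    (f.1 ^ 2 + f.2 ^ 2 > g.1 ^ 2 + g.2 ^ 2 → IsDecomp f (f - g) g) ∧
    (g.1 ^ 2 + g.2 ^ 2 > f.1 ^ 2 + f.2 ^ 2 → IsDecomp g f (g - f)) ∧
    (f.1 ^ 2 + f.2 ^ 2 = g.1 ^ 2 + g.2 ^ 2 → e.1 ^ 2 + e.2 ^ 2 = 2) := by
  obtain ⟨⟨hdet, hip⟩, he⟩ := h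
  simp only [det2, ip2] at hdet hip
  have he1 : e.1 = f.1 + g.1 := by rw [he, Prod.fst_add]
  have he2 : e.2 = f.2 + g.2 := by rw [he, Prod.snd_add]
  have hlag : (f.1 * g.1 + f.2 * g.2) ^ 2 + 1
      = (f.1 ^ 2 + f.2 ^ 2) * (g.1 ^ 2 + g.2 ^ 2) := by nlinarith [hdet]
  have hg1 : 1 ≤ g.1 ^ 2 + g.2 ^ 2 := norm_pos_of_det f g (by rw [hdet]; exact one_ne_zero)
  have hf1 : 1 ≤ f.1 ^ 2 + f.2 ^ 2 :=
    norm_pos_of_det g f (by intro hc; nlinarith [hdet, hc])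
  refine ⟨?_, ?_, ?_⟩
  · intro hgt
    refine ⟨⟨?_, ?_⟩, ?_⟩
    · simp only [det2, Prod.fst_sub, Prod.snd_sub]; ring_nf; linarith [hdet]
    · simp only [ip2, Prod.fst_sub, Prod.snd_sub]
      by_contra hc
      push_neg at hc
      have hle : f.1 * g.1 + f.2 * g.2 ≤ g.1 ^ 2 + g.2 ^ 2 - 1 := by linarith
      nlinarith [hlag, mul_le_mul hle hle hip (by linarith : (0:ℤ) ≤ g.1 ^ 2 + g.2 ^ 2 - 1),
        mul_le_mul_of_nonneg_right (by linarith : g.1 ^ 2 + g.2 ^ 2 + 1 ≤ f.1 ^ 2 + f.2 ^ 2)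
          (by linarith : (0:ℤ) ≤ g.1 ^ 2 + g.2 ^ 2)]
    · ext <;> simp
  · intro hgt
    refine ⟨⟨?_, ?_⟩, ?_⟩
    · simp only [det2, Prod.fst_sub, Prod.snd_sub]; ring_nf; linarith [hdet]
    · simp only [ip2, Prod.fst_sub, Prod.snd_sub]
      by_contra hc
      push_neg at hc
      have hle : f.1 * g.1 + f.2 * g.2 ≤ f.1 ^ 2 + f.2 ^ 2 - 1 := by linarith
      nlinarith [hlag, mul_le_mul hle hle hip (by linarith : (0:ℤ) ≤ f.1 ^ 2 + f.2 ^ 2 - 1),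
        mul_le_mul_of_nonneg_right (by linarith : f.1 ^ 2 + f.2 ^ 2 + 1 ≤ g.1 ^ 2 + g.2 ^ 2)
          (by linarith : (0:ℤ) ≤ f.1 ^ 2 + f.2 ^ 2)]
    · ext <;> simp
  · intro heq
    have hG1 : g.1 ^ 2 + g.2 ^ 2 = 1 := by
      have hle : f.1 * g.1 + f.2 * g.2 ≤ g.1 ^ 2 + g.2 ^ 2 - 1 := by nlinarith [hlag]
      nlinarith [hlag, mul_le_mul hle hle hip (by linarith : (0:ℤ) ≤ g.1 ^ 2 + g.2 ^ 2 - 1)]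
    have hip0 : f.1 * g.1 + f.2 * g.2 = 0 := by nlinarith [hlag, sq_nonneg (f.1 * g.1 + f.2 * g.2)]
    rw [he1, he2]; nlinarith [heq, hG1, hip0]
end

section
/- Let M be a symmetric positive definite 2×2 matrix, and let e = f ⊕ g with ‖e‖ ≥ 1 + κ(M), where κ(M) := √(‖M‖ ‖M⁻¹‖). Then ⟨f, M g⟩ > 0. -/
/-- The larger eigenvalue of the symmetric matrix `!![a, b; b, c]`. -/
noncomputable def topEigenvalue (a b c : ℝ) : ℝ := (a + c + √((a - c) ^ 2 + 4 * b ^ 2)) / 2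

lemma topEigenvalue_le_of_forall_le {a b c C : ℝ}
    (h : ∀ x y : ℝ, a * x ^ 2 + 2 * b * x * y + c * y ^ 2 ≤ C * (x ^ 2 + y ^ 2)) :
    topEigenvalue a b c ≤ C := by
  have ha : a ≤ C := by linarith [h 1 0]
  have hc : c ≤ C := by linarith [h 0 1]
  have hb : b ^ 2 ≤ (C - a) * (C - c) := by
    have := discrim_le_zero (a := C - a) (b := -2 * b) (c := C - c) fun x ↦ by linarith [h x 1]
    rw [discrim] at this
    linarith
  have hsqrt : √((a - c) ^ 2 + 4 * b ^ 2) ≤ 2 * C - a - c :=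
    Real.sqrt_le_iff.2 ⟨by linarith, by linarith⟩
  rw [topEigenvalue]
  linarith

lemma topEigenvalue_inv_mul_swap {a b c d : ℝ} (hd : 0 < d) :
    topEigenvalue (d⁻¹ * c) (d⁻¹ * -b) (d⁻¹ * a) = d⁻¹ * topEigenvalue a b c := by
  have hρ : (d⁻¹ * c - d⁻¹ * a) ^ 2 + 4 * (d⁻¹ * -b) ^ 2
      = d⁻¹ ^ 2 * ((a - c) ^ 2 + 4 * b ^ 2) := by
    ring
  rw [topEigenvalue, topEigenvalue, hρ, Real.sqrt_mul (by positivity),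
    Real.sqrt_sq (by positivity)]
  ring

lemma quadForm_le_opNorm {W : Matrix (Fin 2) (Fin 2) ℝ} (hW : W.IsSymm) (x y : ℝ) :
    W 0 0 * x ^ 2 + 2 * W 0 1 * x * y + W 1 1 * y ^ 2 ≤ opNorm W * (x ^ 2 + y ^ 2) := by
  set v : EuclideanSpace ℝ (Fin 2) := !₂[x, y]
  set T := Matrix.toEuclideanCLM (𝕜 := ℝ) W
  have hquad : inner ℝ v (T v) = W 0 0 * x ^ 2 + 2 * W 0 1 * x * y + W 1 1 * y ^ 2 := by
    simp only [v, T, Matrix.toEuclideanCLM_toLp, Matrix.mulVec_fin_two, Matrix.cons_val_zero,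
      Matrix.cons_val_one, Matrix.cons_val_fin_one, PiLp.inner_apply, RCLike.inner_apply,
      Real.ringHom_apply, Fin.sum_univ_two, hW.apply 0 1]
    ring
  have hnorm : ‖v‖ ^ 2 = x ^ 2 + y ^ 2 := by
    simp [v, EuclideanSpace.norm_sq_eq, Fin.sum_univ_two]
  calc _ = inner ℝ v (T v) := hquad.symm
    _ ≤ ‖v‖ * ‖T v‖ := real_inner_le_norm _ _
    _ ≤ ‖v‖ * (opNorm W * ‖v‖) := by gcongr; exact T.le_opNorm v
    _ = _ := by rw [← hnorm]; ring

lemma topEigenvalue_le_opNorm {W : Matrix (Fin 2) (Fin 2) ℝ} (hW : W.IsSymm) :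
    topEigenvalue (W 0 0) (W 0 1) (W 1 1) ≤ opNorm W :=
  topEigenvalue_le_of_forall_le (quadForm_le_opNorm hW)

lemma topEigenvalue_le_det_mul_opNorm_inv {M : Matrix (Fin 2) (Fin 2) ℝ} (hM : M.IsSymm)
    (hd : 0 < M.det) : topEigenvalue (M 0 0) (M 0 1) (M 1 1) ≤ M.det * opNorm M⁻¹ := by
  have hinv : M⁻¹ = M.det⁻¹ • !![M 1 1, -M 0 1; -M 0 1, M 0 0] := by
    rw [Matrix.inv_def, Matrix.adjugate_fin_two, hM.apply 0 1, Ring.inverse_eq_inv']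
  have h := topEigenvalue_le_opNorm hM.inv
  rw [hinv] at h ⊢
  simp only [Matrix.smul_apply, Matrix.of_apply, Matrix.cons_val', Matrix.cons_val_zero,
    Matrix.cons_val_one, Matrix.empty_val', Matrix.cons_val_fin_one, smul_eq_mul,
    topEigenvalue_inv_mul_swap hd] at h
  rwa [inv_mul_le_iff₀ hd] at h

lemma wielandt_sq {a b c x₁ x₂ y₁ y₂ : ℝ} (hτ : 0 ≤ a + c) (ht : 0 ≤ x₁ * y₁ + x₂ * y₂)
    (hB : a * x₁ * y₁ + b * (x₁ * y₂ + x₂ * y₁) + c * x₂ * y₂ ≤ 0) :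
    4 * (a * c - b ^ 2) * (x₁ * y₁ + x₂ * y₂) ^ 2
      ≤ ((a - c) ^ 2 + 4 * b ^ 2) * (x₁ * y₂ - x₂ * y₁) ^ 2 := by
  set t := x₁ * y₁ + x₂ * y₂
  set D := x₁ * y₂ - x₂ * y₁
  set ρ := (a - c) ^ 2 + 4 * b ^ 2
  set B := a * x₁ * y₁ + b * (x₁ * y₂ + x₂ * y₁) + c * x₂ * y₂
  -- `2M - (tr M) I` is `√ρ` times a reflection, so this is Cauchy–Schwarz.
  have hCS : (2 * B - (a + c) * t) ^ 2 ≤ ρ * (t ^ 2 + D ^ 2) := by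
    have hid : ρ * (t ^ 2 + D ^ 2) - (2 * B - (a + c) * t) ^ 2
        = (x₁ * (2 * b * y₁ - (a - c) * y₂) - x₂ * ((a - c) * y₁ + 2 * b * y₂)) ^ 2 := by
      ring
    linarith [sq_nonneg (x₁ * (2 * b * y₁ - (a - c) * y₂) - x₂ * ((a - c) * y₁ + 2 * b * y₂))]
  have hτt : ((a + c) * t) ^ 2 ≤ (2 * B - (a + c) * t) ^ 2 := by
    rw [← neg_sq (2 * B - _)]
    exact pow_le_pow_left₀ (by positivity) (by linarith) 2
  linear_combination hτt + hCS

lemma add_one_le_sqrt_of_wielandt {a b c t L μ : ℝ} (hτ : 0 ≤ a + c) (hd : 0 < a * c - b ^ 2)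
    (ht : 0 ≤ t) (hW : 4 * (a * c - b ^ 2) * t ^ 2 ≤ (a - c) ^ 2 + 4 * b ^ 2)
    (hL : topEigenvalue a b c ≤ L) (hμ : topEigenvalue a b c ≤ (a * c - b ^ 2) * μ) :
    t + 1 ≤ √(L * μ) := by
  set d := a * c - b ^ 2
  set s := √d
  have hs : s ^ 2 = d := Real.sq_sqrt hd.le
  have hs0 : 0 < s := Real.sqrt_pos.2 hd
  have hst : 2 * s * t ≤ √((a - c) ^ 2 + 4 * b ^ 2) :=
    (Real.le_sqrt (by positivity) (by positivity)).2 (by rw [mul_pow, mul_pow, hs]; linarith)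
  have hsτ : 2 * s ≤ a + c :=
    (sq_le_sq₀ (by positivity) hτ).1 (by nlinarith [sq_nonneg (a - c), sq_nonneg b])
  have hlam : s * (t + 1) ≤ topEigenvalue a b c := by rw [topEigenvalue]; linarith
  have hsq : d * (t + 1) ^ 2 ≤ d * (L * μ) := by
    have h0 : 0 ≤ s * (t + 1) := by positivity
    calc d * (t + 1) ^ 2 = (s * (t + 1)) ^ 2 := by rw [mul_pow, hs]
      _ ≤ topEigenvalue a b c * topEigenvalue a b c := by
        rw [sq]; exact mul_le_mul hlam hlam h0 (h0.trans hlam)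
      _ ≤ L * (d * μ) := mul_le_mul hL hμ (h0.trans hlam) ((h0.trans hlam).trans hL)
      _ = d * (L * μ) := by ring
  exact Real.le_sqrt' (by linarith) |>.2 (le_of_mul_le_mul_left hsq hd)

lemma ip2_self_mul_ip2_self (f g : ℤ × ℤ) : ip2 f f * ip2 g g = ip2 f g ^ 2 + det2 f g ^ 2 := by
  simp only [ip2, det2]; ring

lemma ip2_add_self (f g : ℤ × ℤ) : ip2 (f + g) (f + g) = ip2 f f + 2 * ip2 f g + ip2 g g := by
  simp only [ip2, Prod.fst_add, Prod.snd_add]; ring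

lemma ip2_add_self_le_of_det2_eq_one {f g : ℤ × ℤ} (h : det2 f g = 1) :
    ip2 (f + g) (f + g) ≤ (ip2 f g + 1) ^ 2 + 1 := by
  have hLagrange := ip2_self_mul_ip2_self f g
  rw [h] at hLagrange
  have hf : 0 ≤ ip2 f f := add_nonneg (mul_self_nonneg _) (mul_self_nonneg _)
  have hg : 0 ≤ ip2 g g := add_nonneg (mul_self_nonneg _) (mul_self_nonneg _)
  have hfg : 0 < ip2 f f * ip2 g g := by rw [hLagrange]; positivity
  have hf1 : 1 ≤ ip2 f f := pos_of_mul_pos_left hfg hg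
  have hg1 : 1 ≤ ip2 g g := pos_of_mul_pos_right hfg hf
  rw [ip2_add_self]
  nlinarith [mul_nonneg (sub_nonneg.2 hf1) (sub_nonneg.2 hg1)]

theorem ip2_add_one_le_sqrt_opNorm_mul {M : Matrix (Fin 2) (Fin 2) ℝ} (hM : M.IsSymm)
    (hpos : M.PosDef) {f g : ℤ × ℤ} (hfg : IsDAB f g) (hq : qf M f g ≤ 0) :
    (ip2 f g : ℝ) + 1 ≤ √(opNorm M * opNorm M⁻¹) := by
  have hdet : M.det = M 0 0 * M 1 1 - M 0 1 ^ 2 := by rw [Matrix.det_fin_two, hM.apply 0 1]; ring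
  have hd : 0 < M.det := hpos.det_pos
  have hτ : 0 ≤ M 0 0 + M 1 1 := add_nonneg hpos.diag_pos.le hpos.diag_pos.le
  have hD : (f.1 : ℝ) * g.2 - f.2 * g.1 = 1 := by exact_mod_cast hfg.1
  have ht : (0 : ℝ) ≤ ip2 f g := by exact_mod_cast hfg.2
  have hip : (ip2 f g : ℝ) = f.1 * g.1 + f.2 * g.2 := by push_cast [ip2]; ring
  have hB : M 0 0 * f.1 * g.1 + M 0 1 * (f.1 * g.2 + f.2 * g.1) + M 1 1 * f.2 * g.2 ≤ 0 := by
    rw [qf, hM.apply 0 1] at hq; linarith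
  have hW := wielandt_sq hτ (hip ▸ ht) hB
  rw [hD, one_pow, mul_one, ← hip] at hW
  exact add_one_le_sqrt_of_wielandt hτ (hdet ▸ hd) ht hW
    (topEigenvalue_le_opNorm hM) (hdet ▸ topEigenvalue_le_det_mul_opNorm_inv hM hd)

/-- If `e = f ⊕ g` and `‖e‖ ≥ 1 + κ(M)` with `κ(M) = √(‖M‖ ‖M⁻¹‖)`,
then `⟨f, M g⟩ > 0`. -/
theorem stmt15_far_vertices_acute (M : Matrix (Fin 2) (Fin 2) ℝ)
    (hsym : M.IsSymm) (hpos : M.PosDef)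
    (e f g : ℤ × ℤ) (hdab : IsDAB f g) (he : e = f + g)
    (hnorm : 1 + Real.sqrt (opNorm M * opNorm M⁻¹)
      ≤ Real.sqrt ((e.1 : ℝ) ^ 2 + (e.2 : ℝ) ^ 2)) :
    0 < qf M f g := by
  by_contra! hq
  have hκ := ip2_add_one_le_sqrt_opNorm_mul hsym hpos hdab hq
  have hE : (e.1 : ℝ) ^ 2 + (e.2 : ℝ) ^ 2 = ip2 e e := by push_cast [ip2]; ring
  have hfar : (1 + √(opNorm M * opNorm M⁻¹)) ^ 2 ≤ ip2 e e := by
    have := pow_le_pow_left₀ (by positivity) hnorm 2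
    rwa [Real.sq_sqrt (by positivity), hE] at this
  have hnear : (ip2 e e : ℝ) ≤ (ip2 f g + 1) ^ 2 + 1 := by
    exact_mod_cast he ▸ ip2_add_self_le_of_det2_eq_one hdab.1
  have ht : (0 : ℝ) ≤ ip2 f g := by exact_mod_cast hdab.2
  nlinarith
end

section
/- Let (e₀,e₁,e₂) be a superbase of Z^2 ordered so that ‖e₀‖ ≥ max{‖e₁‖, ‖e₂‖} and det(e₁,e₂) = 1. Then −e₀ = e₁ ⊕ e₂, i.e. (e₁,e₂) is a direct acute basis with e₁ + e₂ = −e₀. -/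
/-- If `(e₀,e₁,e₂)` is a superbase with `‖e₀‖ ≥ max{‖e₁‖,‖e₂‖}` and `det(e₁,e₂) = 1`,
then `−e₀ = e₁ ⊕ e₂`, i.e. `(e₁,e₂)` is a direct acute basis summing to `−e₀`. -/
theorem stmt16_superbase_decomp (e₀ e₁ e₂ : ℤ × ℤ)
    (hsb : IsSuperbase e₀ e₁ e₂)
    (hord : e₀.1 ^ 2 + e₀.2 ^ 2 ≥ max (e₁.1 ^ 2 + e₁.2 ^ 2) (e₂.1 ^ 2 + e₂.2 ^ 2))
    (hdet : det2 e₁ e₂ = 1) :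
    IsDAB e₁ e₂ ∧ e₁ + e₂ = -e₀ := by
  obtain ⟨hsum, -⟩ := hsb
  have h1 : e₀.1 + e₁.1 + e₂.1 = 0 := congrArg Prod.fst hsum
  have h2 : e₀.2 + e₁.2 + e₂.2 = 0 := congrArg Prod.snd hsum
  have ha := le_of_max_le_left hord
  have hb := le_of_max_le_right hord
  unfold det2 at hdet
  refine ⟨⟨hdet, ?_⟩, ?_⟩
  · unfold ip2
    have he1 : e₀.1 = -e₁.1 - e₂.1 := by linarith
    have he2 : e₀.2 = -e₁.2 - e₂.2 := by linarith
    rw [he1, he2] at ha hb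
    set p := e₁.1 * e₂.1 + e₁.2 * e₂.2 with hp
    have hA : e₂.1 ^ 2 + e₂.2 ^ 2 + 2 * p ≥ 0 := by nlinarith [ha]
    have hB : e₁.1 ^ 2 + e₁.2 ^ 2 + 2 * p ≥ 0 := by nlinarith [hb]
    have hL : (e₁.1 ^ 2 + e₁.2 ^ 2) * (e₂.1 ^ 2 + e₂.2 ^ 2) = 1 + p ^ 2 := by
      rw [hp]; nlinarith [hdet]
    by_contra hneg
    push_neg at hneg
    have hp1 : p ≤ -1 := by omega
    nlinarith [mul_le_mul hB hA (by linarith) (by nlinarith)]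
  · have : e₁ + e₂ = -e₀ := by
      ext <;> simp <;> linarith
    exact this
end

section
/- Let e = f' ⊕ g', and let (f,g) be a direct acute basis of Z^2 such that e lies in the open cone {λf + μg : λ, μ > 0}. Then f + g, f', and g' all belong to the closed triangle with vertices e, f, g. -/
lemma det2_smul_add_smul (f g : ℤ × ℤ) (p q r s : ℤ) :
    det2 (p • f + q • g) (r • f + s • g) = (p * s - q * r) * det2 f g := by
  simp only [det2, Prod.fst_add, Prod.snd_add, Prod.smul_fst, Prod.smul_snd, smul_eq_mul]
  ring

lemma ip2_smul_add_smul (f g : ℤ × ℤ) (p q r s : ℤ) :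
    ip2 (p • f + q • g) (r • f + s • g) =
      p * r * ip2 f f + q * s * ip2 g g + (p * s + q * r) * ip2 f g := by
  simp only [ip2, Prod.fst_add, Prod.snd_add, Prod.smul_fst, Prod.smul_snd, smul_eq_mul]
  ring

lemma ip2_self_pos_s17 {v : ℤ × ℤ} (hv : v ≠ 0) : 0 < ip2 v v := by
  obtain ⟨a, b⟩ := v
  have : a ≠ 0 ∨ b ≠ 0 := by
    contrapose! hv
    simp [hv]
  simp only [ip2]
  rcases this with h | h <;> nlinarith [mul_self_pos.2 h, mul_self_nonneg a, mul_self_nonneg b]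

lemma eq_det2_smul_add_det2_smul {f g : ℤ × ℤ} (h : det2 f g = 1) (v : ℤ × ℤ) :
    v = det2 v g • f + det2 f v • g := by
  simp only [det2] at h ⊢
  ext <;> simp only [Prod.fst_add, Prod.snd_add, Prod.smul_fst, Prod.smul_snd, smul_eq_mul]
  · linear_combination (-v.1) * h
  · linear_combination (-v.2) * h

lemma coeff_nonneg_of_acute {p q r s A B C : ℤ} (hdet : p * s - q * r = 1)
    (hpr : 0 < p + r) (hqs : 0 < q + s) (hA : 0 < A) (hB : 0 < B) (hC : 0 ≤ C)
    (hip : 0 ≤ p * r * A + q * s * B + (p * s + q * r) * C) : 0 ≤ q := by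
  by_contra! hq
  -- `s ≥ 2`; if `r ≤ 0` then `p s ≥ (1 - r) (1 - q) > 1 + q r`, and if `r > 0` then
  -- `p ≤ 0`, so all three terms of `hip` are nonpositive and the middle one is negative.
  rcases le_or_gt r 0 with hr | hr
  · nlinarith [mul_le_mul (by omega : 1 - r ≤ p) (by omega : 1 - q ≤ s) (by omega) (by omega)]
  · have hp : p ≤ 0 := by nlinarith
    nlinarith [mul_nonpos_of_nonpos_of_nonneg (by nlinarith : p * r ≤ 0) hA.le,
      mul_neg_of_neg_of_pos (by nlinarith : q * s < 0) hB,
      mul_nonpos_of_nonpos_of_nonneg (by nlinarith : p * s + q * r ≤ 0) hC]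

lemma coeff_pos_of_nonneg {p q r s : ℤ} (hdet : p * s - q * r = 1)
    (hpr : 0 < p + r) (hqs : 0 < q + s) (hq : 0 ≤ q) (hr : 0 ≤ r) : 0 < p := by
  by_contra! hp
  have hp' : p < 0 := by
    rcases hp.lt_or_eq with h | rfl
    · exact h
    · nlinarith
  have hs : s < 0 := by nlinarith
  -- `r ≥ 1 - p` and `q ≥ 1 - s` give `q r ≥ (1 - p) (1 - s) > p s - 1`.
  nlinarith [mul_le_mul (by omega : 1 - p ≤ r) (by omega : 1 - s ≤ q) (by omega) (by omega)]

lemma coeff_signs_of_isDAB {f g : ℤ × ℤ} {p q r s : ℤ} (hfg : IsDAB f g)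
    (hfg' : IsDAB (p • f + q • g) (r • f + s • g)) (hpr : 0 < p + r) (hqs : 0 < q + s) :
    p * s - q * r = 1 ∧ 0 < p ∧ 0 ≤ q ∧ 0 ≤ r ∧ 0 < s := by
  obtain ⟨hd, hC⟩ := hfg
  obtain ⟨hdet, hip⟩ := hfg'
  rw [det2_smul_add_smul, hd, mul_one] at hdet
  rw [ip2_smul_add_smul] at hip
  have hf : f ≠ 0 := by rintro rfl; simp [det2] at hd
  have hg : g ≠ 0 := by rintro rfl; simp [det2] at hd
  have hA := ip2_self_pos_s17 hf
  have hB := ip2_self_pos_s17 hg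
  have hq := coeff_nonneg_of_acute hdet hpr hqs hA hB hC hip
  -- the hypotheses are invariant under `(p, q, r, s, f, g) ↦ (s, r, q, p, g, f)`
  have hr := coeff_nonneg_of_acute (p := s) (q := r) (r := q) (s := p) (by linarith) (by omega)
    (by omega) hB hA hC (by linarith)
  have hp := coeff_pos_of_nonneg hdet hpr hqs hq hr
  have hs := coeff_pos_of_nonneg (p := s) (q := r) (r := q) (s := p) (by linarith) (by omega)
    (by omega) hr hq
  exact ⟨hdet, hp, hq, hr, hs⟩

lemma toR2_add (u v : ℤ × ℤ) : toR2 (u + v) = toR2 u + toR2 v := by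
  simp [toR2]

lemma toR2_zsmul (n : ℤ) (v : ℤ × ℤ) : toR2 (n • v) = (n : ℝ) • toR2 v := by
  simp [toR2]

lemma cast_eq_of_toR2_eq {f g : ℤ × ℤ} (hfg : det2 f g ≠ 0) {a b : ℤ} {lam mu : ℝ}
    (h : toR2 (a • f + b • g) = (lam * f.1 + mu * g.1, lam * f.2 + mu * g.2)) :
    (a : ℝ) = lam ∧ (b : ℝ) = mu := by
  rw [toR2_add, toR2_zsmul, toR2_zsmul, Prod.ext_iff] at h
  have h1 : (a : ℝ) * f.1 + b * g.1 = lam * f.1 + mu * g.1 := by simpa [toR2] using h.1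
  have h2 : (a : ℝ) * f.2 + b * g.2 = lam * f.2 + mu * g.2 := by simpa [toR2] using h.2
  have hd : (det2 f g : ℝ) ≠ 0 := by exact_mod_cast hfg
  constructor <;> apply mul_right_cancel₀ hd <;> push_cast [det2]
  · linear_combination (g.2 : ℝ) * h1 - (g.1 : ℝ) * h2
  · linear_combination (f.1 : ℝ) * h2 - (f.2 : ℝ) * h1

lemma mem_convexHull_triple_of_smul_eq {E : Type*} [AddCommGroup E] [Module ℝ E]
    {x u v w : E} {a b c : ℝ} (ha : 0 ≤ a) (hb : 0 ≤ b) (hc : 0 ≤ c) (habc : 0 < a + b + c)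
    (h : (a + b + c) • x = a • u + b • v + c • w) : x ∈ convexHull ℝ {u, v, w} := by
  have hx : x = Finset.univ.centerMass ![a, b, c] ![u, v, w] := by
    rw [Finset.centerMass, Fin.sum_univ_three, Fin.sum_univ_three]
    simp only [Matrix.cons_val_zero, Matrix.cons_val_one, Matrix.cons_val_two, Matrix.head_cons,
      Matrix.tail_cons]
    rw [← h, smul_smul, inv_mul_cancel₀ habc.ne', one_smul]
  rw [hx]
  refine Finset.centerMass_mem_convexHull _ (fun i _ => ?_) (by simpa [Fin.sum_univ_three])
    (fun i _ => ?_)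
  · fin_cases i <;> simpa
  · fin_cases i <;> simp

lemma toR2_mem_convexHull_of_zsmul_eq {x u v w : ℤ × ℤ} {a b c : ℤ} (ha : 0 ≤ a)
    (hb : 0 ≤ b) (hc : 0 ≤ c) (habc : 0 < a + b + c)
    (h : (a + b + c) • x = a • u + b • v + c • w) :
    toR2 x ∈ convexHull ℝ {toR2 u, toR2 v, toR2 w} := by
  refine mem_convexHull_triple_of_smul_eq (a := a) (b := b) (c := c) (by exact_mod_cast ha)
    (by exact_mod_cast hb) (by exact_mod_cast hc) (by exact_mod_cast habc) ?_
  simpa only [toR2_add, toR2_zsmul, Int.cast_add] using congrArg toR2 h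

lemma smul_add_smul_mem_triangle {e f g : ℤ × ℤ} {p q r s : ℤ}
    (hdet : p * s - q * r = 1) (hp : 0 < p) (hq : 0 ≤ q) (hr : 0 ≤ r) (hs : 0 < s)
    (he : e = (p + r) • f + (q + s) • g) :
    toR2 (f + g) ∈ convexHull ℝ {toR2 e, toR2 f, toR2 g} ∧
    toR2 (p • f + q • g) ∈ convexHull ℝ {toR2 e, toR2 f, toR2 g} ∧
    toR2 (r • f + s • g) ∈ convexHull ℝ {toR2 e, toR2 f, toR2 g} := by
  subst he
  -- each identity reduces to `p s - q r = 1`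
  refine ⟨?_, ?_, ?_⟩
  · refine toR2_mem_convexHull_of_zsmul_eq (a := 1) (b := q + s - 1) (c := p + r - 1)
      (by omega) (by omega) (by omega) (by omega) ?_
    module
  · refine toR2_mem_convexHull_of_zsmul_eq (a := p + q - 1) (b := r + 1) (c := s - 1)
      (by omega) (by omega) (by omega) (by omega) ?_
    linear_combination (norm := module) hdet • (f - g)
  · refine toR2_mem_convexHull_of_zsmul_eq (a := r + s - 1) (b := p - 1) (c := q + 1)
      (by omega) (by omega) (by omega) (by omega) ?_
    linear_combination (norm := module) hdet • (g - f)

/-- If `e = f' ⊕ g'` and `(f,g)` is a direct acute basis with `e` in the open cone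
spanned by `f, g`, then `f+g`, `f'`, `g'` belong to the closed triangle `[e, f, g]`. -/
theorem stmt17_parents_in_triangle (e f' g' f g : ℤ × ℤ)
    (hdab' : IsDAB f' g') (he : e = f' + g') (hdab : IsDAB f g)
    (hcone : ∃ lam mu : ℝ, 0 < lam ∧ 0 < mu ∧
      toR2 e = (lam * (f.1 : ℝ) + mu * (g.1 : ℝ), lam * (f.2 : ℝ) + mu * (g.2 : ℝ))) :
    toR2 (f + g) ∈ convexHull ℝ ({toR2 e, toR2 f, toR2 g} : Set (ℝ × ℝ)) ∧
    toR2 f' ∈ convexHull ℝ ({toR2 e, toR2 f, toR2 g} : Set (ℝ × ℝ)) ∧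
    toR2 g' ∈ convexHull ℝ ({toR2 e, toR2 f, toR2 g} : Set (ℝ × ℝ)) := by
  obtain ⟨lam, mu, hlam, hmu, hE⟩ := hcone
  obtain ⟨p, q, rfl⟩ : ∃ p q : ℤ, f' = p • f + q • g :=
    ⟨_, _, eq_det2_smul_add_det2_smul hdab.1 f'⟩
  obtain ⟨r, s, rfl⟩ : ∃ r s : ℤ, g' = r • f + s • g :=
    ⟨_, _, eq_det2_smul_add_det2_smul hdab.1 g'⟩
  have he_coords : e = (p + r) • f + (q + s) • g := by rw [he]; module
  obtain ⟨hpr, hqs⟩ := cast_eq_of_toR2_eq (by simp [hdab.1]) (he_coords ▸ hE)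
  obtain ⟨hdet, hp, hq, hr, hs⟩ := coeff_signs_of_isDAB hdab hdab'
    (by exact_mod_cast hpr ▸ hlam) (by exact_mod_cast hqs ▸ hmu)
  exact smul_add_smul_mem_triangle hdet hp hq hr hs he_coords
end

section
/- In the graph T on {e ∈ Z² : gcd(e) = 1} with edges e → f ⊕ e and e → e ⊕ g for each e = f ⊕ g: if ‖e‖² = 2 then no edge of T arrives at e, and if ‖e‖² > 2 (with e = f ⊕ g) then exactly one edge of T arrives at e, and it is either f → e or g → e. -/
set_option maxHeartbeats 2000000


/-- Edge relation of the graph `𝕋`: from each `e = f ⊕ g` there are edges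
`e → f + e` and `e → e + g`. -/
def TEdge (a b : ℤ × ℤ) : Prop :=
  ∃ f g : ℤ × ℤ, IsDecomp a f g ∧ (b = f + a ∨ b = a + g)

/-- A nonzero determinant forces a nonzero vector. -/
lemma one_le_norm_aux {f1 f2 g1 g2 : ℤ} (hd : f1 * g2 - f2 * g1 = 1) :
    1 ≤ f1 ^ 2 + f2 ^ 2 := by
  by_contra hcon
  push_neg at hcon
  have h1 : f1 ^ 2 = 0 :=
    le_antisymm (by nlinarith [sq_nonneg f2]) (sq_nonneg f1)
  have h2 : f2 ^ 2 = 0 :=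
    le_antisymm (by nlinarith [sq_nonneg f1]) (sq_nonneg f2)
  have hf1 : f1 = 0 := pow_eq_zero_iff (by norm_num) |>.mp h1
  have hf2 : f2 = 0 := pow_eq_zero_iff (by norm_num) |>.mp h2
  rw [hf1, hf2] at hd
  simp at hd

/-- Integer vectors parallel to a primitive vector are integer multiples of it. -/
lemma parallel_aux {u1 u2 e1 e2 : ℤ} (hc : IsCoprime e1 e2) (h : u1 * e2 = u2 * e1) :
    ∃ t : ℤ, u1 = t * e1 ∧ u2 = t * e2 := by
  have hd : e1 ∣ u1 := hc.dvd_of_dvd_mul_right ⟨u2, by linarith⟩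
  obtain ⟨t, ht⟩ := hd
  rcases eq_or_ne e1 0 with h1 | h1
  · subst h1
    have hu1 : u1 = 0 := by simpa using ht
    have h2 : IsUnit e2 := isCoprime_zero_left.mp hc
    rcases Int.isUnit_iff.mp h2 with h2 | h2 <;> subst h2
    · exact ⟨u2, by simp [hu1]⟩
    · exact ⟨-u2, by simp [hu1]⟩
  · refine ⟨t, by linarith, ?_⟩
    have hcan : e1 * u2 = e1 * (t * e2) := by linear_combination e2 * ht - h
    exact mul_left_cancel₀ h1 hcan

/-- Key quadratic lemma: the only integer solution of the incoming-edge
inequality is `t = 0`. -/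
lemma keyquad {F G p t : ℤ} (hF : 1 ≤ F) (hG : 1 ≤ G) (hp : 0 ≤ p)
    (h : 2*(F+G+2*p)*t^2 + (3*F + 2*p - G)*t + (F - p) ≤ 0) : t = 0 := by
  have hid : 2*(F+G+2*p)*t^2 + (3*F + 2*p - G)*t + (F - p)
      = G*(2*t^2-t) + F*((t+1)*(2*t+1)) + p*(4*t^2+2*t-1) := by ring
  rw [hid] at h
  rcases lt_trichotomy t 0 with ht | ht | ht
  · exfalso
    have h1 : t ≤ -1 := by omega
    have c1 : 1 ≤ 2*t^2 - t := by nlinarith [sq_nonneg (t+1)]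
    have c2 : 0 ≤ (t+1)*(2*t+1) := by nlinarith [sq_nonneg (t+1)]
    have c3 : 0 ≤ 4*t^2+2*t-1 := by nlinarith [sq_nonneg (t+1)]
    have p1 : G*1 ≤ G*(2*t^2 - t) := mul_le_mul_of_nonneg_left c1 (by linarith)
    have p2 : 0 ≤ F*((t+1)*(2*t+1)) := mul_nonneg (by linarith) c2
    have p3 : 0 ≤ p*(4*t^2+2*t-1) := mul_nonneg hp c3
    linarith
  · exact ht
  · exfalso
    have h1 : 1 ≤ t := ht
    have c1 : 1 ≤ 2*t^2 - t := by nlinarith [sq_nonneg (t-1)]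
    have c2 : 0 ≤ (t+1)*(2*t+1) := by nlinarith [sq_nonneg t]
    have c3 : 0 ≤ 4*t^2+2*t-1 := by nlinarith [sq_nonneg (t-1)]
    have p1 : G*1 ≤ G*(2*t^2 - t) := mul_le_mul_of_nonneg_left c1 (by linarith)
    have p2 : 0 ≤ F*((t+1)*(2*t+1)) := mul_nonneg (by linarith) c2
    have p3 : 0 ≤ p*(4*t^2+2*t-1) := mul_nonneg hp c3
    linarith

/-- Characterization of incoming edges. -/
lemma tedge_iff (a e : ℤ × ℤ) :
    TEdge a e ↔ ∃ x : ℤ × ℤ, (det2 x e = 1 ∨ det2 e x = 1) ∧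
      2 * (x.1^2 + x.2^2) ≤ ip2 x e ∧ a = e - x := by
  constructor
  · rintro ⟨f, g, ⟨⟨hd, hip⟩, ha⟩, hcase | hcase⟩
    · refine ⟨f, Or.inl ?_, ?_, ?_⟩
      · rw [hcase, ha]
        simp only [det2, ip2, Prod.fst_add, Prod.snd_add] at hd ⊢
        linear_combination hd
      · rw [hcase, ha]
        simp only [det2, ip2, Prod.fst_add, Prod.snd_add] at hip ⊢
        nlinarith [sq_nonneg f.1, sq_nonneg f.2]
      · rw [hcase, ha]; ring
    · refine ⟨g, Or.inr ?_, ?_, ?_⟩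
      · rw [hcase, ha]
        simp only [det2, ip2, Prod.fst_add, Prod.snd_add] at hd ⊢
        linear_combination hd
      · rw [hcase, ha]
        simp only [det2, ip2, Prod.fst_add, Prod.snd_add] at hip ⊢
        nlinarith [sq_nonneg g.1, sq_nonneg g.2]
      · rw [hcase, ha]; ring
  · rintro ⟨x, hx | hx, hip, ha⟩
    · refine ⟨x, e - x - x, ⟨⟨?_, ?_⟩, ?_⟩, Or.inl ?_⟩
      · simp only [det2, ip2, Prod.fst_sub, Prod.snd_sub] at hx ⊢
        linear_combination hx
      · simp only [det2, ip2, Prod.fst_sub, Prod.snd_sub] at hip ⊢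
        linarith
      · rw [ha]; ring
      · rw [ha]; ring
    · refine ⟨e - x - x, x, ⟨⟨?_, ?_⟩, ?_⟩, Or.inr ?_⟩
      · simp only [det2, ip2, Prod.fst_sub, Prod.snd_sub] at hx ⊢
        linear_combination hx
      · simp only [det2, ip2, Prod.fst_sub, Prod.snd_sub] at hip ⊢
        linarith
      · rw [ha]; ring
      · rw [ha]; ring

/-- If `‖e‖² = 2` then no edge of `𝕋` arrives at `e`; if `‖e‖² > 2` and `e = f ⊕ g`,
then exactly one edge arrives at `e`, which is either `f → e` or `g → e`. -/
theorem stmt18_unique_incoming_edge (e : ℤ × ℤ) :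
    (e.1 ^ 2 + e.2 ^ 2 = 2 → ¬ ∃ a : ℤ × ℤ, TEdge a e) ∧
    (∀ f g : ℤ × ℤ, IsDecomp e f g → e.1 ^ 2 + e.2 ^ 2 > 2 →
      (∃! a : ℤ × ℤ, TEdge a e) ∧ (∀ a : ℤ × ℤ, TEdge a e → a = f ∨ a = g)) := by
  constructor
  · rintro h2 ⟨a, ha⟩
    rw [tedge_iff] at ha
    obtain ⟨x, hx, hip, -⟩ := ha
    simp only [det2, ip2] at hx hip
    have hsq : (x.1*e.2 - x.2*e.1)^2 = 1 := by
      rcases hx with hx | hx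
      · rw [hx]; norm_num
      · have : x.1*e.2 - x.2*e.1 = -1 := by linarith
        rw [this]; norm_num
    have hX : 1 ≤ x.1^2 + x.2^2 := by
      rcases hx with hx | hx
      · exact one_le_norm_aux hx
      · have := one_le_norm_aux (f1 := x.2) (f2 := x.1) (g1 := e.2) (g2 := e.1)
          (by linarith)
        linarith
    have hL : (x.1*e.2 - x.2*e.1)^2 + (x.1*e.1 + x.2*e.2)^2
        = (x.1^2 + x.2^2) * (e.1^2 + e.2^2) := by ring
    nlinarith [sq_nonneg (x.1*e.1 + x.2*e.2 - 1), hsq, hL, hip, hX, h2]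
  · rintro f g ⟨⟨hd, hp⟩, he⟩ hgt
    have he1 : e.1 = f.1 + g.1 := by rw [he]; rfl
    have he2 : e.2 = f.2 + g.2 := by rw [he]; rfl
    simp only [det2, ip2] at hd hp
    have hF : 1 ≤ f.1^2 + f.2^2 := one_le_norm_aux hd
    have hG : 1 ≤ g.1^2 + g.2^2 := by
      have := one_le_norm_aux (f1 := g.2) (f2 := g.1) (g1 := f.2) (g2 := f.1)
        (by linarith)
      linarith
    have hLag : (f.1^2+f.2^2) * (g.1^2+g.2^2) = 1 + (f.1*g.1+f.2*g.2)^2 := by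
      linear_combination (f.1*g.2 - f.2*g.1 + 1) * hd
    have hE : e.1^2 + e.2^2 = (f.1^2+f.2^2) + (g.1^2+g.2^2) + 2*(f.1*g.1+f.2*g.2) := by
      rw [he1, he2]; ring
    -- classification of incoming edges
    have hclass : ∀ a : ℤ × ℤ, TEdge a e →
        (a = g ∧ f.1^2+f.2^2 ≤ f.1*g.1+f.2*g.2) ∨
        (a = f ∧ g.1^2+g.2^2 ≤ f.1*g.1+f.2*g.2) := by
      intro a ha
      rw [tedge_iff] at ha
      obtain ⟨x, hx, hip, hax⟩ := ha
      simp only [det2, ip2] at hx hip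
      rcases hx with hx | hx
      · -- det2 x e = 1 : x = f + t e, conclude t = 0, a = g
        left
        have hc : IsCoprime e.1 e.2 := ⟨-x.2, x.1, by linarith⟩
        have hdfe : f.1*e.2 - f.2*e.1 = 1 := by rw [he1, he2]; linear_combination hd
        have hpar : (x.1 - f.1) * e.2 = (x.2 - f.2) * e.1 := by linarith
        obtain ⟨t, ht1, ht2⟩ := parallel_aux hc hpar
        have hx1 : x.1 = f.1 + t*(f.1+g.1) := by rw [he1] at ht1; linarith
        have hx2 : x.2 = f.2 + t*(f.2+g.2) := by rw [he2] at ht2; linarith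
        rw [hx1, hx2, he1, he2] at hip
        have hQ : 2*((f.1^2+f.2^2)+(g.1^2+g.2^2)+2*(f.1*g.1+f.2*g.2))*t^2
            + (3*(f.1^2+f.2^2) + 2*(f.1*g.1+f.2*g.2) - (g.1^2+g.2^2))*t
            + ((f.1^2+f.2^2) - (f.1*g.1+f.2*g.2)) ≤ 0 := by
          have hident : 2*((f.1^2+f.2^2)+(g.1^2+g.2^2)+2*(f.1*g.1+f.2*g.2))*t^2
              + (3*(f.1^2+f.2^2) + 2*(f.1*g.1+f.2*g.2) - (g.1^2+g.2^2))*t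
              + ((f.1^2+f.2^2) - (f.1*g.1+f.2*g.2))
              = 2*((f.1 + t*(f.1+g.1))^2 + (f.2 + t*(f.2+g.2))^2)
                - ((f.1 + t*(f.1+g.1))*(f.1+g.1) + (f.2 + t*(f.2+g.2))*(f.2+g.2)) := by
            ring
          rw [hident]
          linarith [hip]
        have ht0 : t = 0 := keyquad hF hG hp hQ
        rw [ht0] at hx1 hx2 hQ
        constructor
        · rw [hax, he]
          have hxf : x = f := Prod.ext (by linarith) (by linarith)
          rw [hxf]; ring
        · nlinarith [hQ]
      · -- det2 e x = 1 : x = g + t e, conclude t = 0, a = f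
        right
        have hc : IsCoprime e.1 e.2 := ⟨x.2, -x.1, by linarith⟩
        have hdeg : e.1*g.2 - e.2*g.1 = 1 := by rw [he1, he2]; linear_combination hd
        have hpar : (x.1 - g.1) * e.2 = (x.2 - g.2) * e.1 := by linarith
        obtain ⟨t, ht1, ht2⟩ := parallel_aux hc hpar
        have hx1 : x.1 = g.1 + t*(f.1+g.1) := by rw [he1] at ht1; linarith
        have hx2 : x.2 = g.2 + t*(f.2+g.2) := by rw [he2] at ht2; linarith
        rw [hx1, hx2, he1, he2] at hip
        have hQ : 2*((g.1^2+g.2^2)+(f.1^2+f.2^2)+2*(f.1*g.1+f.2*g.2))*t^2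
            + (3*(g.1^2+g.2^2) + 2*(f.1*g.1+f.2*g.2) - (f.1^2+f.2^2))*t
            + ((g.1^2+g.2^2) - (f.1*g.1+f.2*g.2)) ≤ 0 := by
          have hident : 2*((g.1^2+g.2^2)+(f.1^2+f.2^2)+2*(f.1*g.1+f.2*g.2))*t^2
              + (3*(g.1^2+g.2^2) + 2*(f.1*g.1+f.2*g.2) - (f.1^2+f.2^2))*t
              + ((g.1^2+g.2^2) - (f.1*g.1+f.2*g.2))
              = 2*((g.1 + t*(f.1+g.1))^2 + (g.2 + t*(f.2+g.2))^2)
                - ((g.1 + t*(f.1+g.1))*(f.1+g.1) + (g.2 + t*(f.2+g.2))*(f.2+g.2)) := by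
            ring
          rw [hident]
          linarith [hip]
        have ht0 : t = 0 := keyquad hG hF hp hQ
        rw [ht0] at hx1 hx2 hQ
        constructor
        · rw [hax, he]
          have hxg : x = g := Prod.ext (by linarith) (by linarith)
          rw [hxg]; ring
        · nlinarith [hQ]
    -- exclusivity
    have hnotboth : ¬ (f.1^2+f.2^2 ≤ f.1*g.1+f.2*g.2 ∧ g.1^2+g.2^2 ≤ f.1*g.1+f.2*g.2) := by
      rintro ⟨h1, h2⟩
      have := mul_le_mul h1 h2 (by linarith) (by linarith)
      nlinarith [hLag, this]
    have hor : f.1^2+f.2^2 ≤ f.1*g.1+f.2*g.2 ∨ g.1^2+g.2^2 ≤ f.1*g.1+f.2*g.2 := by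
      by_contra hcon
      push_neg at hcon
      obtain ⟨h1, h2⟩ := hcon
      have p1 : (f.1*g.1+f.2*g.2 + 1) * (f.1*g.1+f.2*g.2 + 1) ≤ (f.1^2+f.2^2) * (g.1^2+g.2^2) :=
        mul_le_mul (by linarith) (by linarith) (by linarith) (by linarith)
      have p2 : 0 ≤ ((f.1^2+f.2^2) - 1) * ((g.1^2+g.2^2) - 1) :=
        mul_nonneg (by linarith) (by linarith)
      nlinarith [hLag, p1, p2, hE, hgt]
    constructor
    · -- existence and uniqueness
      rcases hor with hFp | hGp
      · refine ⟨g, ?_, ?_⟩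
        · refine ⟨f, g - f, ⟨⟨?_, ?_⟩, by ring⟩, Or.inl ?_⟩
          · simp only [det2, Prod.fst_sub, Prod.snd_sub]
            linear_combination hd
          · simp only [ip2, Prod.fst_sub, Prod.snd_sub]
            nlinarith [hFp]
          · rw [he]
        · intro y hy
          rcases hclass y hy with ⟨h, _⟩ | ⟨h, hG'⟩
          · exact h
          · exact absurd ⟨hFp, hG'⟩ hnotboth
      · refine ⟨f, ?_, ?_⟩
        · refine ⟨f - g, g, ⟨⟨?_, ?_⟩, by ring⟩, Or.inr ?_⟩
          · simp only [det2, Prod.fst_sub, Prod.snd_sub]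
            linear_combination hd
          · simp only [ip2, Prod.fst_sub, Prod.snd_sub]
            nlinarith [hGp]
          · rw [he]
        · intro y hy
          rcases hclass y hy with ⟨h, hF'⟩ | ⟨h, _⟩
          · exact absurd ⟨hF', hGp⟩ hnotboth
          · exact h
    · intro a ha
      rcases hclass a ha with ⟨h, _⟩ | ⟨h, _⟩
      · exact Or.inr h
      · exact Or.inl h
end

section
/- Every edge of the graph T joins two points lying in the interior of the same quadrant of the plane; in particular if e = f ⊕ g then the edges e → f + e and e → e + g stay within the open quadrant containing e. -/
/-! If `det(f, g) = 1` then `(f₁g₁)(f₂g₂) = (f₂g₁)(f₂g₁ + 1) ≥ 0`, so together with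
`⟨f, g⟩ ≥ 0` both products `fᵢgᵢ` are nonnegative: `f` and `g` lie in a common closed
quadrant, and `e = f + g` lies in its interior because `det(f, g) ≠ 0` rules out
`fᵢ = gᵢ = 0`. The endpoints `f + e` and `e + g` are then sums of a point of the closed
quadrant and a point of the open one. -/

theorem Int.mul_add_one_nonneg (n : ℤ) : 0 ≤ n * (n + 1) := by
  rcases le_or_gt 0 n with hn | hn
  · positivity
  · exact mul_nonneg_of_nonpos_of_nonpos hn.le (by omega)

section LinearOrderedCommRing

variable {R : Type*} [CommRing R] [LinearOrder R] [IsStrictOrderedRing R] {x y : R}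

theorem nonneg_and_nonneg_of_mul_nonneg_of_add_nonneg (hxy : 0 ≤ x * y) (hsum : 0 ≤ x + y) :
    0 ≤ x ∧ 0 ≤ y := by
  rcases mul_nonneg_iff.mp hxy with h | ⟨hx, hy⟩
  · exact h
  · constructor <;> linarith

theorem eq_zero_and_eq_zero_of_mul_nonneg_of_add_eq_zero (hxy : 0 ≤ x * y) (hsum : x + y = 0) :
    x = 0 ∧ y = 0 := by
  have hx : x = -y := eq_neg_of_add_eq_zero_left hsum
  have hy : y = 0 :=
    mul_self_eq_zero.mp (le_antisymm (by simpa [hx] using hxy) (mul_self_nonneg y))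
  exact ⟨by simp [hx, hy], hy⟩

theorem exists_sign_mul_nonneg_of_mul_nonneg (hxy : 0 ≤ x * y) (hsum : x + y ≠ 0) :
    ∃ α : R, (α = 1 ∨ α = -1) ∧ 0 ≤ α * x ∧ 0 ≤ α * y ∧ 0 < α * (x + y) := by
  rcases mul_nonneg_iff.mp hxy with ⟨hx, hy⟩ | ⟨hx, hy⟩
  · refine ⟨1, Or.inl rfl, ?_⟩
    simp only [one_mul]
    exact ⟨hx, hy, lt_of_le_of_ne (add_nonneg hx hy) hsum.symm⟩
  · refine ⟨-1, Or.inr rfl, ?_⟩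
    simp only [neg_one_mul, neg_nonneg, neg_pos]
    exact ⟨hx, hy, lt_of_le_of_ne (add_nonpos hx hy) hsum⟩

end LinearOrderedCommRing

theorem IsDAB.mul_nonneg {f g : ℤ × ℤ} (h : IsDAB f g) : 0 ≤ f.1 * g.1 ∧ 0 ≤ f.2 * g.2 := by
  obtain ⟨hdet, hip⟩ := h
  have hprod : (f.1 * g.1) * (f.2 * g.2) = (f.2 * g.1) * (f.2 * g.1 + 1) := by
    rw [← sub_eq_iff_eq_add'.mp hdet]; ring
  exact nonneg_and_nonneg_of_mul_nonneg_of_add_nonneg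
    (hprod ▸ Int.mul_add_one_nonneg _) hip

theorem IsDAB.add_ne_zero {f g : ℤ × ℤ} (h : IsDAB f g) : f.1 + g.1 ≠ 0 ∧ f.2 + g.2 ≠ 0 := by
  have hdet := h.1
  obtain ⟨h₁, h₂⟩ := h.mul_nonneg
  constructor <;> intro hsum
  · obtain ⟨hf, hg⟩ := eq_zero_and_eq_zero_of_mul_nonneg_of_add_eq_zero h₁ hsum
    simp [det2, hf, hg] at hdet
  · obtain ⟨hf, hg⟩ := eq_zero_and_eq_zero_of_mul_nonneg_of_add_eq_zero h₂ hsum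
    simp [det2, hf, hg] at hdet

theorem IsDecomp.exists_quadrant {e f g : ℤ × ℤ} (h : IsDecomp e f g) :
    ∃ α β : ℤ, (α = 1 ∨ α = -1) ∧ (β = 1 ∨ β = -1) ∧
      0 ≤ α * f.1 ∧ 0 ≤ β * f.2 ∧ 0 ≤ α * g.1 ∧ 0 ≤ β * g.2 ∧
      0 < α * e.1 ∧ 0 < β * e.2 := by
  obtain ⟨hdab, rfl⟩ := h
  obtain ⟨α, hα, hf₁, hg₁, he₁⟩ :=
    exists_sign_mul_nonneg_of_mul_nonneg hdab.mul_nonneg.1 hdab.add_ne_zero.1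
  obtain ⟨β, hβ, hf₂, hg₂, he₂⟩ :=
    exists_sign_mul_nonneg_of_mul_nonneg hdab.mul_nonneg.2 hdab.add_ne_zero.2
  exact ⟨α, β, hα, hβ, hf₁, hf₂, hg₁, hg₂, he₁, he₂⟩

theorem IsDecomp.exists_open_quadrant {e f g : ℤ × ℤ} (h : IsDecomp e f g) :
    ∃ α β : ℤ, (α = 1 ∨ α = -1) ∧ (β = 1 ∨ β = -1) ∧
      0 < α * e.1 ∧ 0 < β * e.2 ∧
      0 < α * (f + e).1 ∧ 0 < β * (f + e).2 ∧
      0 < α * (e + g).1 ∧ 0 < β * (e + g).2 := by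
  obtain ⟨α, β, hα, hβ, hf₁, hf₂, hg₁, hg₂, he₁, he₂⟩ := h.exists_quadrant
  refine ⟨α, β, hα, hβ, he₁, he₂, ?_, ?_, ?_, ?_⟩ <;>
    simp only [Prod.fst_add, Prod.snd_add, mul_add] <;> linarith

/-- Every edge of `𝕋` joins two points lying in the interior of the same quadrant;
in particular if `e = f ⊕ g` then the edges `e → f + e` and `e → e + g` stay within
the open quadrant containing `e`. -/
theorem stmt19_edges_in_open_quadrant :
    (∀ a b : ℤ × ℤ, TEdge a b →
      ∃ α β : ℤ, (α = 1 ∨ α = -1) ∧ (β = 1 ∨ β = -1) ∧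
        0 < α * a.1 ∧ 0 < β * a.2 ∧ 0 < α * b.1 ∧ 0 < β * b.2) ∧
    (∀ e f g : ℤ × ℤ, IsDecomp e f g →
      ∃ α β : ℤ, (α = 1 ∨ α = -1) ∧ (β = 1 ∨ β = -1) ∧
        0 < α * e.1 ∧ 0 < β * e.2 ∧
        0 < α * (f + e).1 ∧ 0 < β * (f + e).2 ∧
        0 < α * (e + g).1 ∧ 0 < β * (e + g).2) := by
  refine ⟨?_, fun e f g h => h.exists_open_quadrant⟩
  rintro a b ⟨f, g, hdec, rfl | rfl⟩ <;>
    obtain ⟨α, β, hα, hβ, ha₁, ha₂, hf₁, hf₂, hg₁, hg₂⟩ := hdec.exists_open_quadrant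
  · exact ⟨α, β, hα, hβ, ha₁, ha₂, hf₁, hf₂⟩
  · exact ⟨α, β, hα, hβ, ha₁, ha₂, hg₁, hg₂⟩
end
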